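/- arXiv:1906.11163 — 5 statements merged into one kernel-verified Lean document; each statement's English description precedes it below -/
import Mathlib

section
/- Let p be a prime and M a module over S = ℤ[t]/(t^p − 1). The following are equivalent: (1) multiplication by p is invertible on M; (2) ker(1 − t^M) = im N(t^M), im(1 − t^M) = ker N(t^M), and M = ker N(t^M) ⊕ ker(1 − t^M); (3) (1 − t^M) restricts to an invertible map on ker N(t^M) and N(t^M) restricts to an invertible map on ker(1 − t^M). -/
/-!
Write `D = 1 - t` and `N = N(t)`, so that `N D = D N = 0` and `N = p` on `ker D`. Two identities
in `ℤ[t]` drive the argument: `p = N + D c` for some `c` (as `p - N = ∑ (1 - t^j)`), and, because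
`p` is prime and `t^p = 1`, `D^p = p g` for some `g` (binomial theorem). If `p` is invertible, the
first identity splits `x = p y` as `N y + D (c y) ∈ ker D + ker N`, which gives all of (2).
Conversely, under (3) the map `D^p = p g` is bijective on `ker N`, so `ker N` is `p`-torsion free
and `p`-divisible in `M`, while `N = p` is bijective on `ker D`; since `N` maps `M` into `ker D`,
these glue to the bijectivity of `p` on `M`.
-/

/-- The norm endomorphism `N(t) = 1 + t + ⋯ + t^{p-1}` of a module over `ℤ[t]/(t^p - 1)`,
encoded as an abelian group `M` with an endomorphism `t` satisfying `t^p = 1`. -/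
def normEnd (p : ℕ) {M : Type*} [AddCommGroup M] (t : AddMonoid.End M) : AddMonoid.End M :=
  ∑ j ∈ Finset.range p, t ^ j

open Finset

section Ring

variable {R : Type*} [Ring R]

theorem exists_natCast_eq_geom_sum_add_one_sub_mul (t : R) (n : ℕ) :
    ∃ c : R, (n : R) = ∑ i ∈ range n, t ^ i + (1 - t) * c := by
  induction n with
  | zero => exact ⟨0, by simp⟩
  | succ n ih =>
    obtain ⟨c, hc⟩ := ih
    refine ⟨c + ∑ i ∈ range n, t ^ i, ?_⟩
    rw [sum_range_succ, mul_add, mul_neg_geom_sum, Nat.cast_succ, hc]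
    abel

theorem exists_one_sub_pow_eq_natCast_mul {p : ℕ} (hp : p.Prime) {t : R} (ht : t ^ p = 1) :
    ∃ g : R, (1 - t) ^ p = p * g := by
  obtain ⟨r, hr⟩ := (Commute.one_left (-t)).exists_add_pow_prime_eq hp
  rw [← sub_eq_add_neg, one_pow] at hr
  -- `1 + (-1) ^ p` is `2 = p` for `p = 2` and `0` for odd `p`
  rcases hp.eq_two_or_odd' with rfl | hodd
  · refine ⟨1 - t * r, ?_⟩
    rw [hr, neg_sq, ht]
    push_cast
    noncomm_ring
  · refine ⟨-(t * r), ?_⟩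
    rw [hr, hodd.neg_pow, ht]
    noncomm_ring

end Ring

theorem AddMonoidHom.bijOn_ker_of_range_eq_ker_of_isCompl {M N : Type*} [AddCommGroup M]
    [AddCommGroup N] {f : M →+ M} {g : M →+ N} (hfg : f.range = g.ker)
    (hc : IsCompl g.ker f.ker) : Set.BijOn f g.ker g.ker := by
  refine ⟨fun x _ => hfg ▸ ⟨x, rfl⟩, fun x hx y hy hxy => ?_, fun y hy => ?_⟩
  · rw [← sub_eq_zero]
    refine (AddSubgroup.disjoint_def.mp hc.disjoint) (sub_mem hx hy) ?_
    rw [f.mem_ker, map_sub, hxy, sub_self]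
  · obtain ⟨c, rfl⟩ : y ∈ f.range := hfg ▸ hy
    obtain ⟨a, ha, b, hb, rfl⟩ := AddSubgroup.mem_sup.mp (hc.codisjoint.eq_top ▸ trivial :
      c ∈ g.ker ⊔ f.ker)
    exact ⟨a, ha, by rw [map_add, f.mem_ker.mp hb, add_zero]⟩

section NormEnd

variable {M : Type*} [AddCommGroup M] {p : ℕ} {t : AddMonoid.End M}

theorem AddMonoid.End.mem_ker {f : AddMonoid.End M} {x : M} :
    x ∈ AddMonoidHom.ker f ↔ f x = 0 :=
  Iff.rfl

theorem normEnd_mul_one_sub (ht : t ^ p = 1) : normEnd p t * (1 - t) = 0 := by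
  rw [normEnd, geom_sum_mul_neg, ht, sub_self]

theorem one_sub_mul_normEnd (ht : t ^ p = 1) : (1 - t) * normEnd p t = 0 := by
  rw [normEnd, mul_neg_geom_sum, ht, sub_self]

theorem range_one_sub_le_ker_normEnd (ht : t ^ p = 1) :
    AddMonoidHom.range ((1 : AddMonoid.End M) - t) ≤ AddMonoidHom.ker (normEnd p t) := by
  rintro _ ⟨x, rfl⟩
  exact DFunLike.congr_fun (normEnd_mul_one_sub ht) x

theorem range_normEnd_le_ker_one_sub (ht : t ^ p = 1) :
    AddMonoidHom.range (normEnd p t) ≤ AddMonoidHom.ker ((1 : AddMonoid.End M) - t) := by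
  rintro _ ⟨x, rfl⟩
  exact DFunLike.congr_fun (one_sub_mul_normEnd ht) x

theorem normEnd_apply_of_mem_ker {x : M}
    (hx : x ∈ AddMonoidHom.ker ((1 : AddMonoid.End M) - t)) :
    normEnd p t x = p • x := by
  have hfix : ∀ j, (t ^ j) x = x := by
    intro j
    rw [AddMonoid.End.coe_pow]
    exact Function.iterate_fixed (sub_eq_zero.mp hx).symm j
  change (∑ j ∈ range p, t ^ j) • x = p • x
  simp only [sum_smul, AddMonoid.End.smul_def, hfix, sum_const, card_range]

theorem exists_nsmul_eq_normEnd_add (p : ℕ) (t : AddMonoid.End M) :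
    ∃ c : AddMonoid.End M, ∀ x, p • x = normEnd p t x + (1 - t) (c x) := by
  obtain ⟨c, hc⟩ := exists_natCast_eq_geom_sum_add_one_sub_mul t p
  exact ⟨c, fun x => DFunLike.congr_fun hc x⟩

theorem exists_one_sub_pow_apply_eq_nsmul (hp : p.Prime) (ht : t ^ p = 1) :
    ∃ g : AddMonoid.End M, ∀ x, ((1 - t) ^ p) x = p • g x := by
  obtain ⟨g, hg⟩ := exists_one_sub_pow_eq_natCast_mul hp ht
  exact ⟨g, fun x => DFunLike.congr_fun hg x⟩

section UniquelyDivisible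

variable (hbij : Function.Bijective fun x : M => p • x)
include hbij

theorem ker_one_sub_eq_range_normEnd (ht : t ^ p = 1) :
    AddMonoidHom.ker ((1 : AddMonoid.End M) - t) = AddMonoidHom.range (normEnd p t) := by
  refine le_antisymm (fun x hx => ?_) (range_normEnd_le_ker_one_sub ht)
  obtain ⟨y, rfl⟩ : ∃ y, p • y = x := hbij.2 x
  have hy : ((1 : AddMonoid.End M) - t) y = 0 := hbij.1 <| by
    simpa only [AddMonoid.End.mem_ker, map_nsmul, smul_zero] using hx
  exact ⟨y, normEnd_apply_of_mem_ker hy⟩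

theorem range_one_sub_eq_ker_normEnd (ht : t ^ p = 1) :
    AddMonoidHom.range ((1 : AddMonoid.End M) - t) = AddMonoidHom.ker (normEnd p t) := by
  refine le_antisymm (range_one_sub_le_ker_normEnd ht) (fun x hx => ?_)
  obtain ⟨c, hc⟩ := exists_nsmul_eq_normEnd_add p t
  obtain ⟨y, rfl⟩ : ∃ y, p • y = x := hbij.2 x
  have hy : normEnd p t y = 0 := hbij.1 <| by
    simpa only [AddMonoid.End.mem_ker, map_nsmul, smul_zero] using hx
  -- `rfl` identifies the `AddMonoid.End` and `M →+ M` coercions of `1 - t`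
  exact ⟨c y, by rw [hc y, hy, zero_add]; rfl⟩

theorem isCompl_ker_normEnd_ker_one_sub (ht : t ^ p = 1) :
    IsCompl (AddMonoidHom.ker (normEnd p t)) (AddMonoidHom.ker ((1 : AddMonoid.End M) - t)) := by
  refine ⟨AddSubgroup.disjoint_def.mpr fun {x} hN hD => hbij.1 ?_, codisjoint_iff_le_sup.mpr ?_⟩
  · simpa only [smul_zero, ← normEnd_apply_of_mem_ker hD] using AddMonoid.End.mem_ker.mp hN
  · intro x _
    obtain ⟨c, hc⟩ := exists_nsmul_eq_normEnd_add p t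
    obtain ⟨y, rfl⟩ : ∃ y, p • y = x := hbij.2 x
    rw [hc y, add_comm]
    exact AddSubgroup.add_mem_sup (range_one_sub_le_ker_normEnd ht ⟨c y, rfl⟩)
      (range_normEnd_le_ker_one_sub ht ⟨y, rfl⟩)

end UniquelyDivisible

section KerNormEnd

variable (hp : p.Prime) (ht : t ^ p = 1)
    (hD : Set.BijOn ((1 : AddMonoid.End M) - t) (AddMonoidHom.ker (normEnd p t))
      (AddMonoidHom.ker (normEnd p t)))
include hp ht hD

theorem injOn_nsmul_ker_normEnd :
    Set.InjOn (fun x : M => p • x) (AddMonoidHom.ker (normEnd p t)) := by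
  obtain ⟨g, hg⟩ := exists_one_sub_pow_apply_eq_nsmul hp ht
  intro x hx y hy hxy
  refine (hD.iterate p).injOn hx hy ?_
  simp only [← AddMonoid.End.coe_pow, hg, ← map_nsmul]
  exact congrArg g hxy

theorem ker_normEnd_subset_range_nsmul :
    (AddMonoidHom.ker (normEnd p t) : Set M) ⊆ Set.range (fun x : M => p • x) := by
  obtain ⟨g, hg⟩ := exists_one_sub_pow_apply_eq_nsmul hp ht
  intro y hy
  obtain ⟨z, -, rfl⟩ := (hD.iterate p).surjOn hy
  exact ⟨g z, by rw [← AddMonoid.End.coe_pow, hg]⟩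

end KerNormEnd

theorem bijective_nsmul_of_bijOn (hp : p.Prime) (ht : t ^ p = 1)
    (hD : Set.BijOn ((1 : AddMonoid.End M) - t) (AddMonoidHom.ker (normEnd p t))
      (AddMonoidHom.ker (normEnd p t)))
    (hN : Set.BijOn (normEnd p t) (AddMonoidHom.ker ((1 : AddMonoid.End M) - t))
      (AddMonoidHom.ker ((1 : AddMonoid.End M) - t))) :
    Function.Bijective fun x : M => p • x := by
  have hKinj := injOn_nsmul_ker_normEnd hp ht hD
  have hKsurj := ker_normEnd_subset_range_nsmul hp ht hD
  have hF : Set.BijOn (fun x : M => p • x) (AddMonoidHom.ker ((1 : AddMonoid.End M) - t))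
      (AddMonoidHom.ker ((1 : AddMonoid.End M) - t)) :=
    hN.congr fun _ hx => normEnd_apply_of_mem_ker hx
  have hNF (x : M) : normEnd p t x ∈ AddMonoidHom.ker ((1 : AddMonoid.End M) - t) :=
    range_normEnd_le_ker_one_sub ht ⟨x, rfl⟩
  refine ⟨(injective_iff_map_eq_zero (p : AddMonoid.End M)).mpr fun x hx => ?_, fun y => ?_⟩
  · replace hx : p • x = 0 := hx
    have hNx : normEnd p t x = 0 := hF.injOn (hNF x) (zero_mem _) <| by
      simp only [← map_nsmul, hx, map_zero, smul_zero]
    exact hKinj hNx (zero_mem _) (by simp only [hx, smul_zero])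
  · obtain ⟨w, hw, hwy⟩ := hF.surjOn (hNF y)
    obtain ⟨v, hv, rfl⟩ := hF.surjOn hw
    -- `N y = p w = p (p v) = N (p v)`
    have hyv : y - p • v ∈ AddMonoidHom.ker (normEnd p t) := by
      rw [AddMonoid.End.mem_ker, map_sub, ← hwy, map_nsmul, normEnd_apply_of_mem_ker hv,
        sub_self]
    obtain ⟨z, hz⟩ := hKsurj hyv
    exact ⟨z + v, by simp only [smul_add, hz, sub_add_cancel]⟩

theorem bijOn_one_sub_and_bijOn_normEnd_of_isCompl
    (hker : AddMonoidHom.ker ((1 : AddMonoid.End M) - t) = AddMonoidHom.range (normEnd p t))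
    (hrange : AddMonoidHom.range ((1 : AddMonoid.End M) - t) = AddMonoidHom.ker (normEnd p t))
    (hcompl : IsCompl (AddMonoidHom.ker (normEnd p t))
      (AddMonoidHom.ker ((1 : AddMonoid.End M) - t))) :
    Set.BijOn ((1 : AddMonoid.End M) - t) (AddMonoidHom.ker (normEnd p t))
        (AddMonoidHom.ker (normEnd p t)) ∧
      Set.BijOn (normEnd p t) (AddMonoidHom.ker ((1 : AddMonoid.End M) - t))
        (AddMonoidHom.ker ((1 : AddMonoid.End M) - t)) :=
  ⟨AddMonoidHom.bijOn_ker_of_range_eq_ker_of_isCompl hrange hcompl,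
    AddMonoidHom.bijOn_ker_of_range_eq_ker_of_isCompl hker.symm hcompl.symm⟩

end NormEnd

/-- For a prime `p` and a module `M` over `S = ℤ[t]/(t^p − 1)` the following are
equivalent: (1) multiplication by `p` is invertible on `M`; (2) `ker(1 − t) = im N(t)`,
`im(1 − t) = ker N(t)` and `M = ker N(t) ⊕ ker(1 − t)` (as an internal direct sum, i.e. the two
kernels are complementary subgroups); (3) `1 − t` restricts to an invertible map on `ker N(t)`
and `N(t)` restricts to an invertible map on `ker(1 − t)`. -/
theorem stmt6 (p : ℕ) (hp : p.Prime) {M : Type*} [AddCommGroup M] (t : AddMonoid.End M)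
    (ht : t ^ p = 1) :
    ((Function.Bijective fun x : M => p • x) ↔
      (AddMonoidHom.ker ((1 : AddMonoid.End M) - t) = AddMonoidHom.range (normEnd p t) ∧
       AddMonoidHom.range ((1 : AddMonoid.End M) - t) = AddMonoidHom.ker (normEnd p t) ∧
       IsCompl (AddMonoidHom.ker (normEnd p t))
         (AddMonoidHom.ker ((1 : AddMonoid.End M) - t)))) ∧
    ((Function.Bijective fun x : M => p • x) ↔
      (Set.BijOn ⇑((1 : AddMonoid.End M) - t)
          (AddMonoidHom.ker (normEnd p t) : Set M) (AddMonoidHom.ker (normEnd p t) : Set M) ∧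
       Set.BijOn ⇑(normEnd p t)
          (AddMonoidHom.ker ((1 : AddMonoid.End M) - t) : Set M)
          (AddMonoidHom.ker ((1 : AddMonoid.End M) - t) : Set M))) := by
  have h12 (h1 : Function.Bijective fun x : M => p • x) :=
    And.intro (ker_one_sub_eq_range_normEnd h1 ht)
      (And.intro (range_one_sub_eq_ker_normEnd h1 ht) (isCompl_ker_normEnd_ker_one_sub h1 ht))
  have h23 := fun (h2 : _ ∧ _ ∧ _) =>
    bijOn_one_sub_and_bijOn_normEnd_of_isCompl (p := p) (t := t) h2.1 h2.2.1 h2.2.2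
  have h31 := fun (h3 : _ ∧ _) => bijective_nsmul_of_bijOn hp ht h3.1 h3.2
  exact ⟨⟨h12, fun h2 => h31 (h23 h2)⟩, ⟨fun h1 => h23 (h12 h1), h31⟩⟩
end

section
/- Let p be a prime, ϑ a primitive p-th root of unity, and M a module over S = ℤ[t]/(t^p − 1) with ker(1 − t^M) = 0. Let (e_i)_{i∈I} be elements of M representing a ℤ/p-basis of coker(1 − t^M). Then the map ψ : ⨁_{i∈I} ℤ[ϑ] → M, (f_i) ↦ Σ f_i(t^M)(e_i), is well defined (N(t^M) = 0 so the S-action factors through ℤ[ϑ] ≅ ℤ[t]/(N(t))) and injective, and its cokernel is uniquely p-divisible. -/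
open Polynomial Finset

namespace AddMonoid.End

variable {M : Type*} [AddCommGroup M] (f g : AddMonoid.End M) (m : M)

@[simp] theorem sub_apply : (f - g) m = f m - g m := rfl

@[simp] theorem neg_apply : (-f) m = -f m := rfl

end AddMonoid.End

section Polynomial

theorem one_sub_X_pow_pred_eq_geom_sum (p : ℕ) [hp : Fact p.Prime] :
    (1 - X : (ZMod p)[X]) ^ (p - 1) = ∑ j ∈ range p, X ^ j := by
  have hX : (1 - X : (ZMod p)[X]) ≠ 0 := by
    rw [sub_ne_zero]; exact (X_ne_C 1).symm
  apply mul_left_cancel₀ hX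
  rw [← pow_succ', Nat.sub_add_cancel hp.out.one_le, mul_neg_geom_sum, sub_pow_char, one_pow]

theorem exists_one_sub_X_pow_pred_eq_geom_sum_add {p : ℕ} (hp : p.Prime) :
    ∃ w : ℤ[X], (1 - X) ^ (p - 1) = ∑ j ∈ range p, X ^ j + C (p : ℤ) * w := by
  have : Fact p.Prime := ⟨hp⟩
  suffices h : C (p : ℤ) ∣ (1 - X) ^ (p - 1) - ∑ j ∈ range p, X ^ j by
    obtain ⟨w, hw⟩ := h
    exact ⟨w, by rw [← hw, add_sub_cancel]⟩
  rw [C_dvd_iff_dvd_coeff]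
  intro n
  rw [← ZMod.intCast_zmod_eq_zero_iff_dvd, ← eq_intCast (Int.castRingHom (ZMod p)), ← coeff_map]
  simp [Polynomial.map_sub, one_sub_X_pow_pred_eq_geom_sum]

/-- Since `N(1) = p`, subtracting `(q(1) / p) N` makes `q` vanish at `1` when `p ∣ q(1)`. -/
noncomputable def quotOneSubX (p : ℕ) (q : ℤ[X]) : ℤ[X] :=
  (C (q.eval 1 / p) * ∑ j ∈ range p, X ^ j - q) /ₘ (X - C 1)

@[simp]
theorem quotOneSubX_zero (p : ℕ) : quotOneSubX p 0 = 0 := by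
  simp [quotOneSubX]

theorem geom_sum_dvd_sub_one_sub_X_mul_quotOneSubX {p : ℕ} {q : ℤ[X]} (hq : (p : ℤ) ∣ q.eval 1) :
    ∑ j ∈ range p, X ^ j ∣ q - (1 - X) * quotOneSubX p q := by
  have hroot : IsRoot (C (q.eval 1 / p) * ∑ j ∈ range p, X ^ j - q) 1 := by
    simp [eval_finsetSum, Int.ediv_mul_cancel hq]
  rw [quotOneSubX, ← neg_sub X, neg_mul, ← C_1, mul_divByMonic_eq_iff_isRoot.mpr hroot]
  exact ⟨C (q.eval 1 / p), by ring⟩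

theorem geom_sum_dvd_of_forall_dvd_sub_one_sub_X_pow_mul {p : ℕ} (hp : p.Prime) {q : ℤ[X]}
    (h : ∀ n, ∃ g, ∑ j ∈ range p, X ^ j ∣ q - (1 - X) ^ n * g) :
    ∑ j ∈ range p, X ^ j ∣ q := by
  have : Fact p.Prime := ⟨hp⟩
  set N : ℤ[X] := ∑ j ∈ range p, X ^ j
  have : IsDomain (AdjoinRoot N) := AdjoinRoot.isDomain_of_prime <| by
    rw [show N = cyclotomic p ℤ from (cyclotomic_prime ℤ p).symm]
    exact (cyclotomic.irreducible hp.pos).prime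
  have hJ : Ideal.span {AdjoinRoot.mk N (1 - X)} ≠ ⊤ := by
    rw [Ne, Ideal.span_singleton_eq_top]
    intro hu
    have hN : N.eval₂ (Int.castRingHom (ZMod p)) 1 = 0 := by simp [N, eval₂_finsetSum]
    simpa [AdjoinRoot.lift_mk] using hu.map (AdjoinRoot.lift _ _ hN)
  rw [← AdjoinRoot.mk_eq_zero, ← Ideal.mem_bot, ← Ideal.iInf_pow_eq_bot_of_isDomain _ hJ,
    Ideal.mem_iInf]
  intro n
  obtain ⟨g, hg⟩ := h n
  rw [Ideal.span_singleton_pow, Ideal.mem_span_singleton']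
  refine ⟨AdjoinRoot.mk N g, ?_⟩
  rw [← map_pow, ← map_mul, mul_comm, eq_comm, ← sub_eq_zero, ← map_sub, AdjoinRoot.mk_eq_zero]
  exact hg

end Polynomial

section Endomorphism

variable {M : Type*} [AddCommGroup M] (t : AddMonoid.End M)

theorem aeval_geom_sum_eq_normEnd (p : ℕ) :
    aeval t (∑ j ∈ range p, X ^ j : ℤ[X]) = normEnd p t := by
  simp [normEnd]

variable {t}

theorem normEnd_eq_zero {p : ℕ} (ht : t ^ p = 1) (hinj : Function.Injective ⇑(1 - t)) :
    normEnd p t = 0 := by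
  have h : (1 - t) * normEnd p t = 0 := by rw [normEnd, mul_neg_geom_sum, ht, sub_self]
  ext m
  exact hinj (by simpa using DFunLike.congr_fun h m)

theorem exists_one_sub_pow_pred_eq_nsmul {p : ℕ} (hp : p.Prime) (hN : normEnd p t = 0) :
    ∃ w : ℤ[X], (1 - t) ^ (p - 1) = p • aeval t w := by
  obtain ⟨w, hw⟩ := exists_one_sub_X_pow_pred_eq_geom_sum_add hp
  refine ⟨w, ?_⟩
  have h := congrArg (aeval t) hw
  rw [map_add, aeval_geom_sum_eq_normEnd, hN, zero_add] at h
  simpa [nsmul_eq_mul] using h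

variable (t)

theorem aeval_apply_sub_eval_one_smul_mem_range (q : ℤ[X]) (m : M) :
    aeval t q m - q.eval 1 • m ∈ AddMonoidHom.range ((1 : AddMonoid.End M) - t) := by
  obtain ⟨r, hr⟩ := X_sub_C_dvd_sub_C_eval (a := (1 : ℤ)) (p := q)
  refine ⟨-aeval t r m, ?_⟩
  change ((1 : AddMonoid.End M) - t) _ = _
  simpa [eq_intCast, AddMonoid.End.one_apply, neg_add_eq_sub] using
    (DFunLike.congr_fun (congrArg (aeval t) hr) m).symm

end Endomorphism

section PolySum

variable {M : Type*} [AddCommGroup M] (t : AddMonoid.End M) {I : Type*} (e : I → M)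

noncomputable def polySum : (I →₀ ℤ[X]) →+ M :=
  Finsupp.liftAddHom fun i => (AddMonoidHom.eval (e i)).comp (aeval t).toAddMonoidHom

theorem polySum_apply (f : I →₀ ℤ[X]) :
    polySum t e f = f.sum fun i q => aeval t q (e i) :=
  Finsupp.liftAddHom_apply _ _

theorem polySum_mapRange_mul (q : ℤ[X]) (f : I →₀ ℤ[X]) :
    polySum t e (f.mapRange (q * ·) (mul_zero q)) = aeval t q (polySum t e f) := by
  rw [polySum_apply, polySum_apply, Finsupp.sum_mapRange_index (by simp), Finsupp.sum,
    Finsupp.sum, map_sum]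
  simp

theorem polySum_mapRange_C (c : I →₀ ℤ) :
    polySum t e (c.mapRange C C_0) = Finsupp.linearCombination ℤ e c := by
  simp [polySum_apply, Finsupp.sum_mapRange_index, Finsupp.linearCombination_apply, eq_intCast]

theorem polySum_sub_linearCombination_mem_range (f : I →₀ ℤ[X]) :
    polySum t e f - Finsupp.linearCombination ℤ e (f.mapRange (eval 1) eval_zero) ∈
      AddMonoidHom.range ((1 : AddMonoid.End M) - t) := by
  rw [polySum_apply, Finsupp.linearCombination_apply, Finsupp.sum_mapRange_index (by simp),
    Finsupp.sum, Finsupp.sum, ← Finset.sum_sub_distrib]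
  exact sum_mem fun i _ => aeval_apply_sub_eval_one_smul_mem_range t (f i) (e i)

variable {t e}

theorem polySum_eq_of_dvd_sub {p : ℕ} (hN : normEnd p t = 0) {f g : I →₀ ℤ[X]}
    (h : ∀ i, ∑ j ∈ range p, X ^ j ∣ f i - g i) : polySum t e f = polySum t e g := by
  rw [← sub_eq_zero, ← map_sub, polySum_apply]
  refine Finset.sum_eq_zero fun i _ => ?_
  obtain ⟨r, hr⟩ := h i
  change aeval t _ (e i) = 0
  rw [Finsupp.sub_apply, hr, map_mul, aeval_geom_sum_eq_normEnd, hN, zero_mul,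
    AddMonoid.End.zero_apply]

end PolySum

section Descent

variable {M : Type*} [AddCommGroup M] {t : AddMonoid.End M} {I : Type*} {e : I → M} {p : ℕ}

theorem exists_polySum_eq_one_sub_apply (hN : normEnd p t = 0)
    (hindep : ∀ c : I →₀ ℤ, Finsupp.linearCombination ℤ e c ∈
      AddMonoidHom.range ((1 : AddMonoid.End M) - t) → ∀ i, (p : ℤ) ∣ c i)
    {f : I →₀ ℤ[X]} (hf : polySum t e f ∈ AddMonoidHom.range ((1 : AddMonoid.End M) - t)) :
    ∃ g : I →₀ ℤ[X], (∀ i, ∑ j ∈ range p, X ^ j ∣ f i - (1 - X) * g i) ∧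
      polySum t e f = (1 - t) (polySum t e g) := by
  have hdvd (i : I) : (p : ℤ) ∣ (f i).eval 1 := by
    have h := sub_mem hf (polySum_sub_linearCombination_mem_range t e f)
    rw [sub_sub_cancel] at h
    simpa using hindep _ h i
  set g := f.mapRange (quotOneSubX p) (quotOneSubX_zero p)
  have hg : ∀ i, ∑ j ∈ range p, X ^ j ∣ f i - (1 - X) * g i := fun i => by
    simpa [g] using geom_sum_dvd_sub_one_sub_X_mul_quotOneSubX (hdvd i)
  refine ⟨g, hg, ?_⟩
  rw [show 1 - t = aeval t (1 - X : ℤ[X]) by simp, ← polySum_mapRange_mul]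
  exact polySum_eq_of_dvd_sub hN fun i => by simpa using hg i

theorem exists_dvd_sub_one_sub_X_pow_mul_of_polySum_eq_zero
    (hinj : Function.Injective ⇑((1 : AddMonoid.End M) - t)) (hN : normEnd p t = 0)
    (hindep : ∀ c : I →₀ ℤ, Finsupp.linearCombination ℤ e c ∈
      AddMonoidHom.range ((1 : AddMonoid.End M) - t) → ∀ i, (p : ℤ) ∣ c i)
    (n : ℕ) {f : I →₀ ℤ[X]} (hf : polySum t e f = 0) (i : I) :
    ∃ g, ∑ j ∈ range p, X ^ j ∣ f i - (1 - X) ^ n * g := by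
  induction n generalizing f with
  | zero => exact ⟨f i, by simp⟩
  | succ n ih =>
    obtain ⟨g, hfg, hg⟩ := exists_polySum_eq_one_sub_apply hN hindep (hf ▸ zero_mem _)
    obtain ⟨h, hgh⟩ := ih (hinj (by rw [← hg, hf, map_zero]))
    refine ⟨h, ?_⟩
    have := dvd_add (hfg i) (hgh.mul_left (1 - X))
    convert this using 1
    ring

theorem geom_sum_dvd_of_polySum_eq_zero (hp : p.Prime)
    (hinj : Function.Injective ⇑((1 : AddMonoid.End M) - t)) (hN : normEnd p t = 0)
    (hindep : ∀ c : I →₀ ℤ, Finsupp.linearCombination ℤ e c ∈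
      AddMonoidHom.range ((1 : AddMonoid.End M) - t) → ∀ i, (p : ℤ) ∣ c i)
    {f : I →₀ ℤ[X]} (hf : polySum t e f = 0) (i : I) : ∑ j ∈ range p, X ^ j ∣ f i :=
  geom_sum_dvd_of_forall_dvd_sub_one_sub_X_pow_mul hp fun n =>
    exists_dvd_sub_one_sub_X_pow_mul_of_polySum_eq_zero hinj hN hindep n hf i

theorem exists_eq_polySum_add_one_sub_pow_apply
    (hspan : ∀ x : M, ∃ c : I →₀ ℤ,
      x - Finsupp.linearCombination ℤ e c ∈ AddMonoidHom.range ((1 : AddMonoid.End M) - t))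
    (k : ℕ) (x : M) : ∃ (f : I →₀ ℤ[X]) (z : M), x = polySum t e f + ((1 - t) ^ k) z := by
  induction k with
  | zero => exact ⟨0, x, by simp⟩
  | succ k ih =>
    obtain ⟨f, z, rfl⟩ := ih
    obtain ⟨c, w, hw⟩ := hspan z
    change ((1 : AddMonoid.End M) - t) w = _ at hw
    refine ⟨f + (c.mapRange C C_0).mapRange ((1 - X) ^ k * ·) (mul_zero _), w, ?_⟩
    rw [map_add, polySum_mapRange_mul, polySum_mapRange_C, pow_succ, AddMonoid.End.coe_mul,
      Function.comp_apply, hw, map_sub, show aeval t ((1 - X : ℤ[X]) ^ k) = (1 - t) ^ k by simp]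
    abel

theorem exists_eq_nsmul_add_polySum (hp : p.Prime) (hN : normEnd p t = 0)
    (hspan : ∀ x : M, ∃ c : I →₀ ℤ,
      x - Finsupp.linearCombination ℤ e c ∈ AddMonoidHom.range ((1 : AddMonoid.End M) - t))
    (x : M) : ∃ (y : M) (f : I →₀ ℤ[X]), x = p • y + polySum t e f := by
  obtain ⟨w, hw⟩ := exists_one_sub_pow_pred_eq_nsmul hp hN
  obtain ⟨f, z, rfl⟩ := exists_eq_polySum_add_one_sub_pow_apply hspan (p - 1) x
  exact ⟨aeval t w z, f, by rw [hw, add_comm]; rfl⟩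

theorem mem_range_polySum_of_one_sub_pow_apply_mem
    (hinj : Function.Injective ⇑((1 : AddMonoid.End M) - t)) (hN : normEnd p t = 0)
    (hindep : ∀ c : I →₀ ℤ, Finsupp.linearCombination ℤ e c ∈
      AddMonoidHom.range ((1 : AddMonoid.End M) - t) → ∀ i, (p : ℤ) ∣ c i)
    (k : ℕ) {m : M} (hm : ((1 - t) ^ k) m ∈ AddMonoidHom.range (polySum t e)) :
    m ∈ AddMonoidHom.range (polySum t e) := by
  induction k generalizing m with
  | zero => simpa using hm
  | succ k ih =>
    obtain ⟨f, hf⟩ := ih (by rwa [pow_succ, AddMonoid.End.coe_mul, Function.comp_apply] at hm)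
    obtain ⟨g, -, hg⟩ := exists_polySum_eq_one_sub_apply hN hindep ⟨_, hf.symm⟩
    exact ⟨g, hinj (hg.symm.trans hf)⟩

theorem exists_polySum_eq_of_nsmul_eq (hp : p.Prime)
    (hinj : Function.Injective ⇑((1 : AddMonoid.End M) - t)) (hN : normEnd p t = 0)
    (hindep : ∀ c : I →₀ ℤ, Finsupp.linearCombination ℤ e c ∈
      AddMonoidHom.range ((1 : AddMonoid.End M) - t) → ∀ i, (p : ℤ) ∣ c i)
    {x : M} {f : I →₀ ℤ[X]} (hf : p • x = polySum t e f) : ∃ g, x = polySum t e g := by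
  obtain ⟨w, hw⟩ := exists_one_sub_pow_pred_eq_nsmul hp hN
  obtain ⟨g, hg⟩ := mem_range_polySum_of_one_sub_pow_apply_mem hinj hN hindep (p - 1)
    (m := x) ⟨f.mapRange (w * ·) (mul_zero w), by
      rw [polySum_mapRange_mul, ← hf, hw, map_nsmul]; rfl⟩
  exact ⟨g, hg.symm⟩

end Descent

/-- Let `p` be a prime and `M` a module over `S = ℤ[t]/(t^p − 1)` with
`ker(1 − t^M) = 0`.  Let `(e_i)_{i∈I}` be elements of `M` representing a `ℤ/p`-basis of
`coker(1 − t^M)` (linearly independent mod `p` and spanning, as encoded below).  Then the map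
`ψ : ⨁_{i∈I} ℤ[ϑ] → M`, `(f_i) ↦ Σ f_i(t^M)(e_i)` — here presented on finitely supported
families of integer polynomials — is well defined (`N(t^M) = 0`, so the `S`-action factors
through `ℤ[ϑ] ≅ ℤ[t]/(N(t))`) and injective modulo `N(t)`, and its cokernel is uniquely
`p`-divisible. -/
theorem stmt8 (p : ℕ) (hp : p.Prime) {M : Type*} [AddCommGroup M] {I : Type*}
    (t : AddMonoid.End M) (ht : t ^ p = 1)
    (hinj : AddMonoidHom.ker ((1 : AddMonoid.End M) - t) = ⊥)
    (e : I → M)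
    (hspan : ∀ x : M, ∃ c : I →₀ ℤ,
      x - c.sum (fun i n => n • e i) ∈ AddMonoidHom.range ((1 : AddMonoid.End M) - t))
    (hindep : ∀ c : I →₀ ℤ,
      c.sum (fun i n => n • e i) ∈ AddMonoidHom.range ((1 : AddMonoid.End M) - t) →
      ∀ i, (p : ℤ) ∣ c i)
    (ψ : (I →₀ Polynomial ℤ) → M)
    (hψ : ∀ f : I →₀ Polynomial ℤ, ψ f = f.sum fun i q => Polynomial.aeval t q (e i)) :
    normEnd p t = 0 ∧
    (∀ f : I →₀ Polynomial ℤ, ψ f = 0 →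
      ∀ i, (∑ j ∈ Finset.range p, (Polynomial.X : Polynomial ℤ) ^ j) ∣ f i) ∧
    (∀ x : M, ∃ (y : M) (f : I →₀ Polynomial ℤ), x = p • y + ψ f) ∧
    (∀ x : M, (∃ f : I →₀ Polynomial ℤ, p • x = ψ f) → ∃ f : I →₀ Polynomial ℤ, x = ψ f) := by
  replace hinj : Function.Injective ⇑((1 : AddMonoid.End M) - t) :=
    (AddMonoidHom.ker_eq_bot_iff _).mp hinj
  simp only [← Finsupp.linearCombination_apply ℤ] at hspan hindep
  obtain rfl : ψ = polySum t e := funext fun f => (hψ f).trans (polySum_apply t e f).symm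
  have hN : normEnd p t = 0 := normEnd_eq_zero ht hinj
  exact ⟨hN, fun f hf => geom_sum_dvd_of_polySum_eq_zero hp hinj hN hindep hf,
    exists_eq_nsmul_add_polySum hp hN hspan,
    fun x ⟨f, hf⟩ => exists_polySum_eq_of_nsmul_eq hp hinj hN hindep hf⟩
end

section
/- Let p be a prime and consider the commutative ring S₂ = ℤ[s,t]/((1 − s)(1 − t), N(s) + N(t) − p), where N(x) = 1 + x + ⋯ + x^{p−1}. Then the relations s^p = 1 and t^p = 1 hold in S₂. -/
/-- The ideal of `ℤ[s,t]` (with `s = X 0`, `t = X 1`) generated by `(1 − s)(1 − t)` and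
`N(s) + N(t) − p`, where `N(x) = 1 + x + ⋯ + x^{p−1}`. -/
noncomputable def s2Ideal (p : ℕ) : Ideal (MvPolynomial (Fin 2) ℤ) :=
  Ideal.span
    {(1 - MvPolynomial.X 0) * (1 - MvPolynomial.X 1),
     (∑ j ∈ Finset.range p, MvPolynomial.X 0 ^ j) +
       (∑ j ∈ Finset.range p, MvPolynomial.X 1 ^ j) - (p : MvPolynomial (Fin 2) ℤ)}

/-- The ring `S₂ = ℤ[s,t]/((1 − s)(1 − t), N(s) + N(t) − p)`. -/
abbrev S2 (p : ℕ) : Type := MvPolynomial (Fin 2) ℤ ⧸ s2Ideal p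

lemma stmt11_aux {R : Type*} [CommRing R] (x : R) (p : ℕ) :
    (x - 1) * (∑ j ∈ Finset.range p, ∑ i ∈ Finset.range j, x ^ i) =
      (∑ j ∈ Finset.range p, x ^ j) - p := by
  rw [Finset.mul_sum]
  have h : ∀ j, (x - 1) * ∑ i ∈ Finset.range j, x ^ i = x ^ j - 1 := fun j => by
    rw [mul_comm, geom_sum_mul]
  simp_rw [h, Finset.sum_sub_distrib, Finset.sum_const, Finset.card_range, nsmul_eq_mul,
    mul_one]

lemma stmt11_mem0 (p : ℕ) :
    (MvPolynomial.X 0 : MvPolynomial (Fin 2) ℤ) ^ p - 1 ∈ s2Ideal p := by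
  rw [s2Ideal, Ideal.mem_span_pair]
  exact ⟨-(∑ j ∈ Finset.range p, ∑ i ∈ Finset.range j, MvPolynomial.X 1 ^ i),
      MvPolynomial.X 0 - 1, by
        linear_combination geom_sum_mul (MvPolynomial.X 0 : MvPolynomial (Fin 2) ℤ) p
          - (MvPolynomial.X 0 - 1) * stmt11_aux (MvPolynomial.X 1 : MvPolynomial (Fin 2) ℤ) p⟩

lemma stmt11_mem1 (p : ℕ) :
    (MvPolynomial.X 1 : MvPolynomial (Fin 2) ℤ) ^ p - 1 ∈ s2Ideal p := by
  rw [s2Ideal, Ideal.mem_span_pair]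
  exact ⟨-(∑ j ∈ Finset.range p, ∑ i ∈ Finset.range j, MvPolynomial.X 0 ^ i),
      MvPolynomial.X 1 - 1, by
        linear_combination geom_sum_mul (MvPolynomial.X 1 : MvPolynomial (Fin 2) ℤ) p
          - (MvPolynomial.X 1 - 1) * stmt11_aux (MvPolynomial.X 0 : MvPolynomial (Fin 2) ℤ) p⟩

/-- In `S₂ = ℤ[s,t]/((1 − s)(1 − t), N(s) + N(t) − p)` the relations
`s^p = 1` and `t^p = 1` hold. -/
theorem stmt11 (p : ℕ) (hp : p.Prime) :
    (Ideal.Quotient.mk (s2Ideal p) (MvPolynomial.X 0)) ^ p = 1 ∧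
    (Ideal.Quotient.mk (s2Ideal p) (MvPolynomial.X 1)) ^ p = 1 := by
  constructor <;> [have h := stmt11_mem0 p; have h := stmt11_mem1 p] <;>
    · rw [← map_pow, ← map_one (Ideal.Quotient.mk (s2Ideal p))]
      exact Ideal.Quotient.eq.mpr h
end

section
/- Let p be a prime and M a module over S₂ = ℤ[s,t]/((1 − s)(1 − t), N(s) + N(t) − p). Then im N(s^M) ⊆ im(1 − t^M) ⊆ ker(1 − s^M) ⊆ ker N(t^M), and symmetrically im N(t^M) ⊆ im(1 − s^M) ⊆ ker(1 − t^M) ⊆ ker N(s^M). -/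
/-!
Write `N(x) = 1 + x + ⋯ + x^{p-1}`. Since `(1 - t) (1 + t + ⋯ + t^{j-1}) = 1 - t^j`, summing over
`j < p` gives `p - N(t) = (1 - t) · ∑_{j<p} ∑_{i<j} t^i`, and `p - N(t) = N(s)`; so `N(s)` factors
through `1 - t`. On `ker (1 - s)` the operator `N(s)` acts as multiplication by `p`, so there
`N(t) = p - N(s)` vanishes. Since `s` and `t` commute, the
relations are symmetric in `s` and `t`, which gives the second chain.
-/

open Finset

theorem geom_sum_eq_one_sub_mul_sum_geom_sum {R : Type*} [Ring R] {p : ℕ} {u v : R}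
    (hN : ∑ j ∈ range p, u ^ j + ∑ j ∈ range p, v ^ j = p) :
    ∑ j ∈ range p, u ^ j = (1 - v) * ∑ j ∈ range p, ∑ i ∈ range j, v ^ i := by
  rw [mul_sum, eq_sub_of_add_eq hN]
  simp only [mul_neg_geom_sum, sum_sub_distrib, sum_const, card_range, nsmul_one]

namespace AddMonoid.End

variable {M : Type*} [AddCommGroup M] {p : ℕ} {u v : AddMonoid.End M}

theorem range_geom_sum_le_range_one_sub
    (hN : ∑ j ∈ range p, u ^ j + ∑ j ∈ range p, v ^ j = p) :
    AddMonoidHom.range (∑ j ∈ range p, u ^ j) ≤ AddMonoidHom.range (1 - v) := by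
  rintro _ ⟨x, rfl⟩
  exact ⟨_, (DFunLike.congr_fun (geom_sum_eq_one_sub_mul_sum_geom_sum hN) x).symm⟩

theorem range_one_sub_le_ker_one_sub (huv : (1 - u) * (1 - v) = 0) :
    AddMonoidHom.range (1 - v) ≤ AddMonoidHom.ker (1 - u) :=
  (AddMonoidHom.range_le_ker_iff _ _).2 huv

theorem ker_one_sub_le_ker_geom_sum
    (hN : ∑ j ∈ range p, u ^ j + ∑ j ∈ range p, v ^ j = p) :
    AddMonoidHom.ker (1 - u) ≤ AddMonoidHom.ker (∑ j ∈ range p, v ^ j) := by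
  intro x hx
  have hfix : u • x = x := (sub_eq_zero.1 hx).symm
  have hpow (j : ℕ) : (u ^ j) • x = x := by
    induction j with
    | zero => exact one_smul _ x
    | succ j ih => rw [pow_succ, mul_smul, hfix, ih]
  have hu : (∑ j ∈ range p, u ^ j) • x = p • x := by simp [sum_smul, hpow]
  have hx' : (∑ j ∈ range p, u ^ j) • x + (∑ j ∈ range p, v ^ j) • x = p • x := by
    rw [← add_smul, hN, Nat.cast_smul_eq_nsmul]
  rw [hu] at hx'
  exact add_eq_left.1 hx'

theorem geom_sum_chain (huv : (1 - u) * (1 - v) = 0)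
    (hN : ∑ j ∈ range p, u ^ j + ∑ j ∈ range p, v ^ j = p) :
    AddMonoidHom.range (∑ j ∈ range p, u ^ j) ≤ AddMonoidHom.range (1 - v) ∧
      AddMonoidHom.range (1 - v) ≤ AddMonoidHom.ker (1 - u) ∧
      AddMonoidHom.ker (1 - u) ≤ AddMonoidHom.ker (∑ j ∈ range p, v ^ j) :=
  ⟨range_geom_sum_le_range_one_sub hN, range_one_sub_le_ker_one_sub huv,
    ker_one_sub_le_ker_geom_sum hN⟩

end AddMonoid.End

theorem stmt12_general (p : ℕ) {M : Type*} [AddCommGroup M]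
    (s t : AddMonoid.End M) (hcomm : s * t = t * s)
    (hst : ((1 : AddMonoid.End M) - s) * ((1 : AddMonoid.End M) - t) = 0)
    (hN : (∑ j ∈ Finset.range p, s ^ j) + (∑ j ∈ Finset.range p, t ^ j) =
      (p : AddMonoid.End M)) :
    (AddMonoidHom.range (∑ j ∈ Finset.range p, s ^ j) ≤
        AddMonoidHom.range ((1 : AddMonoid.End M) - t) ∧
      AddMonoidHom.range ((1 : AddMonoid.End M) - t) ≤
        AddMonoidHom.ker ((1 : AddMonoid.End M) - s) ∧
      AddMonoidHom.ker ((1 : AddMonoid.End M) - s) ≤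
        AddMonoidHom.ker (∑ j ∈ Finset.range p, t ^ j)) ∧
    (AddMonoidHom.range (∑ j ∈ Finset.range p, t ^ j) ≤
        AddMonoidHom.range ((1 : AddMonoid.End M) - s) ∧
      AddMonoidHom.range ((1 : AddMonoid.End M) - s) ≤
        AddMonoidHom.ker ((1 : AddMonoid.End M) - t) ∧
      AddMonoidHom.ker ((1 : AddMonoid.End M) - t) ≤
        AddMonoidHom.ker (∑ j ∈ Finset.range p, s ^ j)) := by
  have hts : (1 - t) * (1 - s) = 0 := by
    rw [← ((Commute.one_right _).sub_right ((Commute.one_left t).sub_left hcomm)).eq, hst]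
  exact ⟨AddMonoid.End.geom_sum_chain hst hN,
    AddMonoid.End.geom_sum_chain hts ((add_comm _ _).trans hN)⟩

/-- Let `p` be a prime and `M` a module over
`S₂ = ℤ[s,t]/((1 − s)(1 − t), N(s) + N(t) − p)`, encoded as an abelian group with two commuting
endomorphisms `s`, `t` satisfying the two defining relations.  Then
`im N(s) ⊆ im(1 − t) ⊆ ker(1 − s) ⊆ ker N(t)` and symmetrically
`im N(t) ⊆ im(1 − s) ⊆ ker(1 − t) ⊆ ker N(s)`. -/
theorem stmt12 (p : ℕ) (hp : p.Prime) {M : Type*} [AddCommGroup M]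
    (s t : AddMonoid.End M) (hcomm : s * t = t * s)
    (hst : ((1 : AddMonoid.End M) - s) * ((1 : AddMonoid.End M) - t) = 0)
    (hN : (∑ j ∈ Finset.range p, s ^ j) + (∑ j ∈ Finset.range p, t ^ j) =
      (p : AddMonoid.End M)) :
    (AddMonoidHom.range (∑ j ∈ Finset.range p, s ^ j) ≤
        AddMonoidHom.range ((1 : AddMonoid.End M) - t) ∧
      AddMonoidHom.range ((1 : AddMonoid.End M) - t) ≤
        AddMonoidHom.ker ((1 : AddMonoid.End M) - s) ∧
      AddMonoidHom.ker ((1 : AddMonoid.End M) - s) ≤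
        AddMonoidHom.ker (∑ j ∈ Finset.range p, t ^ j)) ∧
    (AddMonoidHom.range (∑ j ∈ Finset.range p, t ^ j) ≤
        AddMonoidHom.range ((1 : AddMonoid.End M) - s) ∧
      AddMonoidHom.range ((1 : AddMonoid.End M) - s) ≤
        AddMonoidHom.ker ((1 : AddMonoid.End M) - t) ∧
      AddMonoidHom.ker ((1 : AddMonoid.End M) - t) ≤
        AddMonoidHom.ker (∑ j ∈ Finset.range p, s ^ j)) :=
  stmt12_general p s t hcomm hst hN
end

section
/- Let p be a prime, ϑ a primitive p-th root of unity, and let M₂ be a ℤ[ϑ]-module such that both the kernel and the cokernel of multiplication by (1 − ϑ) on M₂ are isomorphic to ℤ/p. Then there is a ℤ[ϑ]-submodule M₂′ ⊆ M₂ with uniquely p-divisible quotient M₂/M₂′, such that either M₂′ ≅ ℤ[ϑ]/(1 − ϑ)^ℓ for some ℓ ≥ 1, or M₂′ ≅ ℤ[ϑ] ⊕ Q where Q = ℤ[ϑ, 1/p]/((1 − ϑ)ℤ[ϑ]). -/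
set_option maxHeartbeats 1000000
set_option synthInstance.maxHeartbeats 400000

/-- The ring `ℤ[ϑ] ≅ ℤ[t]/(N(t))`, with `N(t) = 1 + t + ⋯ + t^{p−1}`. -/
abbrev Rtheta (p : ℕ) : Type :=
  Polynomial ℤ ⧸ Ideal.span ({∑ j ∈ Finset.range p, Polynomial.X ^ j} : Set (Polynomial ℤ))

/-- The primitive root of unity `ϑ`, i.e. the class of `t` in `ℤ[t]/(N(t))`. -/
noncomputable def thetaEl (p : ℕ) : Rtheta p :=
  Ideal.Quotient.mk _ Polynomial.X

set_option linter.unusedSectionVars false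
set_option linter.unusedTactic false
set_option linter.unreachableTactic false
set_option linter.unusedVariables false
set_option linter.unnecessarySimpa false

open Polynomial

namespace S19

noncomputable def Npoly (p : ℕ) : ℤ[X] := ∑ j ∈ Finset.range p, X ^ j

variable (p : ℕ) [hpf : Fact p.Prime]

lemma N_eq_cyclo : Npoly p = cyclotomic p ℤ := (cyclotomic_prime ℤ p).symm

lemma N_prime : Prime (Npoly p) := by
  rw [N_eq_cyclo]
  exact (cyclotomic.irreducible (Nat.pos_of_ne_zero (Nat.Prime.ne_zero Fact.out))).prime

instance : IsDomain (Rtheta p) := by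
  haveI : (Ideal.span ({∑ j ∈ Finset.range p, Polynomial.X ^ j} : Set (Polynomial ℤ))).IsPrime := by
    have he : (∑ j ∈ Finset.range p, (X:ℤ[X]) ^ j) = Npoly p := rfl
    rw [he, Ideal.span_singleton_prime (N_prime p).ne_zero]
    exact N_prime p
  exact Ideal.Quotient.isDomain _

noncomputable abbrev rmk : ℤ[X] →+* Rtheta p :=
  Ideal.Quotient.mk (Ideal.span ({∑ j ∈ Finset.range p, Polynomial.X ^ j} : Set (Polynomial ℤ)))

lemma rmk_N : rmk p (Npoly p) = 0 := by
  rw [Ideal.Quotient.eq_zero_iff_mem]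
  exact Ideal.subset_span rfl

lemma rmk_surjective : Function.Surjective (rmk p) := Ideal.Quotient.mk_surjective

lemma rmk_pi : rmk p (1 - X) = 1 - thetaEl p := by
  rw [map_sub, map_one]; rfl

lemma N_eval_one : (Npoly p).eval 1 = (p : ℤ) := by
  simp [Npoly, eval_finset_sum]

/-- evaluation at 1 mod p -/
noncomputable def eps : Rtheta p →+* ZMod p :=
  Ideal.Quotient.lift _ (eval₂RingHom (Int.castRingHom (ZMod p)) 1) (by
    intro a ha
    rw [Ideal.mem_span_singleton] at ha
    obtain ⟨c, rfl⟩ := ha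
    show eval₂ (Int.castRingHom (ZMod p)) 1 _ = 0
    rw [eval₂_at_one, eval_mul]
    have : ((∑ j ∈ Finset.range p, X ^ j : ℤ[X]).eval 1) = (p : ℤ) := N_eval_one p
    rw [this]
    push_cast
    simp [ZMod.natCast_self])

lemma eps_rmk (f : ℤ[X]) : eps p (rmk p f) = ((f.eval 1 : ℤ) : ZMod p) := by
  show eval₂ (Int.castRingHom (ZMod p)) 1 f = _
  rw [eval₂_at_one]; rfl

lemma eps_pi : eps p (1 - thetaEl p) = 0 := by
  rw [← rmk_pi, eps_rmk]; simp

lemma eps_eq_zero_mem (r : Rtheta p) (h : eps p r = 0) :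
    r ∈ Ideal.span ({1 - thetaEl p} : Set (Rtheta p)) := by
  obtain ⟨f, rfl⟩ := rmk_surjective p r
  rw [eps_rmk] at h
  rw [ZMod.intCast_zmod_eq_zero_iff_dvd] at h
  obtain ⟨k, hk⟩ := h
  have hroot : IsRoot (f - C k * Npoly p) 1 := by
    simp [IsRoot, N_eval_one p, hk, mul_comm]
  obtain ⟨g, hg⟩ := (dvd_iff_isRoot).mpr hroot
  have : f = C k * Npoly p + (X - C 1) * g := by linear_combination hg
  rw [this, map_add, map_mul, map_mul, rmk_N, mul_zero, zero_add]
  rw [Ideal.mem_span_singleton]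
  refine Dvd.dvd.mul_right ⟨-1, ?_⟩ _
  have : rmk p (X - C 1) = thetaEl p - 1 := by rw [map_sub]; rfl
  rw [this]; ring

lemma span_pi_le_ker : ∀ r ∈ Ideal.span ({1 - thetaEl p} : Set (Rtheta p)), eps p r = 0 := by
  intro r hr
  rw [Ideal.mem_span_singleton] at hr
  obtain ⟨c, rfl⟩ := hr
  rw [map_mul, eps_pi, zero_mul]

lemma one_notMem_span_pi : (1 : Rtheta p) ∉ Ideal.span ({1 - thetaEl p} : Set (Rtheta p)) := by
  intro h
  have := span_pi_le_ker p 1 h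
  rw [map_one] at this
  exact one_ne_zero this

lemma eps_surjective : Function.Surjective (eps p) := by
  intro z
  haveI : NeZero p := ⟨hpf.out.ne_zero⟩
  refine ⟨(z.val : Rtheta p), ?_⟩
  rw [map_natCast, ZMod.natCast_val, ZMod.cast_id]

lemma hunit : ∀ s : Rtheta p, s ∉ Ideal.span ({1 - thetaEl p} : Set (Rtheta p)) →
    ∃ c d : Rtheta p, s * c = 1 + (1 - thetaEl p) * d := by
  intro s hs
  have hεs : eps p s ≠ 0 := fun h => hs (eps_eq_zero_mem p s h)
  obtain ⟨c, hc⟩ := eps_surjective p (eps p s)⁻¹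
  have : eps p (s * c - 1) = 0 := by
    rw [map_sub, map_mul, hc, map_one, mul_inv_cancel₀ hεs, sub_self]
  obtain ⟨d, hd⟩ := Ideal.mem_span_singleton.mp (eps_eq_zero_mem p _ this)
  exact ⟨c, d, by linear_combination hd⟩


lemma key_zmodX : ((X : (ZMod p)[X]) - 1) ^ (p - 1) = ∑ j ∈ Finset.range p, X ^ j := by
  haveI : NeZero p := ⟨hpf.out.ne_zero⟩
  have hp1 : p - 1 + 1 = p := Nat.succ_pred_eq_of_pos hpf.out.pos
  have hXne : (X : (ZMod p)[X]) - 1 ≠ 0 := by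
    have := X_sub_C_ne_zero (R := ZMod p) (1 : ZMod p)
    simpa using this
  apply mul_left_cancel₀ hXne
  have h2 : ((X : (ZMod p)[X]) - 1) ^ p = X ^ p - 1 := by
    have := sub_pow_char (R := (ZMod p)[X]) (p := p) (x := X) (y := 1)
    simpa using this
  have h3 : ((X : (ZMod p)[X]) - 1) * (∑ j ∈ Finset.range p, X ^ j) = X ^ p - 1 :=
    mul_geom_sum _ _
  rw [h3, ← pow_succ', hp1, h2]

lemma exists_v : ∃ v : Rtheta p, (1 - thetaEl p) ^ (p - 1) = (p : Rtheta p) * v := by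
  set D : ℤ[X] := (1 - X) ^ (p - 1) - (-1 : ℤ[X]) ^ (p - 1) * Npoly p with hD
  have hmap : D.map (Int.castRingHom (ZMod p)) = 0 := by
    rw [hD, Polynomial.map_sub, Polynomial.map_pow, Polynomial.map_mul, Polynomial.map_pow,
      Polynomial.map_sub, Polynomial.map_one, map_X, Polynomial.map_neg, Polynomial.map_one]
    have hmN : (Npoly p).map (Int.castRingHom (ZMod p)) = ∑ j ∈ Finset.range p, X ^ j := by
      rw [Npoly, Polynomial.map_sum]
      simp
    rw [hmN, ← key_zmodX p]
    have : (1 - X : (ZMod p)[X]) = -1 * (X - 1) := by ring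
    rw [this, mul_pow]
    ring
  have hdvd : ∀ i, (p : ℤ) ∣ D.coeff i := by
    intro i
    have := congrArg (fun q => Polynomial.coeff q i) hmap
    simp only [coeff_map, coeff_zero] at this
    exact_mod_cast (ZMod.intCast_zmod_eq_zero_iff_dvd _ p).mp this
  obtain ⟨g, hg⟩ := (C_dvd_iff_dvd_coeff ((p : ℤ)) D).mpr hdvd
  refine ⟨rmk p g, ?_⟩
  have hfact : (1 - X : ℤ[X]) ^ (p - 1) = (-1 : ℤ[X]) ^ (p - 1) * Npoly p + C (p : ℤ) * g := by
    linear_combination hg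
  have := congrArg (rmk p) hfact
  rw [map_add, map_mul, map_mul, rmk_N, mul_zero, zero_add, map_pow, rmk_pi] at this
  rw [this]
  congr 1

lemma two_pow_lemma : p + 1 < 2 ^ p := by
  have h2 : 2 ≤ p := hpf.out.two_le
  clear hpf
  induction p with
  | zero => omega
  | succ n ih =>
    rcases Nat.lt_or_ge n 2 with h | h
    · interval_cases n <;> simp_all <;> omega
    · have := ih (by omega)
      have h2n : 2 ^ (n+1) = 2 * 2 ^ n := by ring
      omega

noncomputable def eps2 : Rtheta p →+* ZMod (2 ^ p - 1) :=
  Ideal.Quotient.lift _ (eval₂RingHom (Int.castRingHom (ZMod (2 ^ p - 1))) 2) (by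
    intro a ha
    rw [Ideal.mem_span_singleton] at ha
    obtain ⟨c, rfl⟩ := ha
    show eval₂ (Int.castRingHom (ZMod (2 ^ p - 1))) 2 _ = 0
    rw [eval₂_mul]
    have hN0 : eval₂ (Int.castRingHom (ZMod (2 ^ p - 1))) 2 (∑ j ∈ Finset.range p, X ^ j : ℤ[X]) = 0 := by
      rw [eval₂_finset_sum]
      simp only [eval₂_X_pow]
      have hgeom := geom_sum_mul (2 : ZMod (2 ^ p - 1)) p
      have h1 : (2 : ZMod (2 ^ p - 1)) - 1 = 1 := by ring
      rw [h1, mul_one] at hgeom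
      rw [hgeom]
      have h2 : ((2 : ZMod (2 ^ p - 1))) ^ p = ((2 ^ p : ℕ) : ZMod (2 ^ p - 1)) := by push_cast; ring
      have h3 : (2 ^ p : ℕ) = (2 ^ p - 1) + 1 := by
        have := Nat.one_le_two_pow (n := p); omega
      rw [h2, h3, Nat.cast_add, ZMod.natCast_self, Nat.cast_one, zero_add, sub_self]
    rw [hN0, zero_mul])

lemma eps2_rmk (f : ℤ[X]) : eps2 p (rmk p f) = ((f.eval 2 : ℤ) : ZMod (2 ^ p - 1)) := by
  show eval₂ (Int.castRingHom (ZMod (2 ^ p - 1))) 2 f = _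
  rw [show (2 : ZMod (2 ^ p - 1)) = (Int.castRingHom (ZMod (2 ^ p - 1))) 2 by simp]
  rw [eval₂_at_apply]
  rfl

lemma pi_ne_zero : (1 - thetaEl p : Rtheta p) ≠ 0 := by
  intro h0
  haveI : Fact (1 < 2 ^ p - 1) := ⟨by have := two_pow_lemma p; have := hpf.out.two_le; omega⟩
  have h := congrArg (eps2 p) h0
  rw [map_zero, ← rmk_pi, eps2_rmk] at h
  rw [eval_sub, eval_one, eval_X] at h
  norm_num at h

lemma p_ne_zero : (p : Rtheta p) ≠ 0 := by
  intro h0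
  haveI : Fact (1 < 2 ^ p - 1) := ⟨by have := two_pow_lemma p; have := hpf.out.two_le; omega⟩
  have h := congrArg (eps2 p) h0
  rw [map_zero, map_natCast] at h
  rw [ZMod.natCast_eq_zero_iff] at h
  have := Nat.le_of_dvd hpf.out.pos h
  have := two_pow_lemma p
  omega

lemma krull (r : Rtheta p) (h : ∀ n, (1 - thetaEl p) ^ n ∣ r) : r = 0 := by
  have hne : Ideal.span ({1 - thetaEl p} : Set (Rtheta p)) ≠ ⊤ := by
    intro ht
    exact one_notMem_span_pi p (ht ▸ Submodule.mem_top)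
  have hb := Ideal.iInf_pow_eq_bot_of_isDomain (I := Ideal.span {1 - thetaEl p}) hne
  have hmem : r ∈ (⨅ n : ℕ, Ideal.span ({1 - thetaEl p} : Set (Rtheta p)) ^ n) := by
    rw [Submodule.mem_iInf]
    intro n
    rw [Ideal.span_singleton_pow, Ideal.mem_span_singleton]
    exact h n
  rw [hb] at hmem
  exact hmem

end S19

namespace S19A

variable {R : Type} [CommRing R] {M : Type} [AddCommGroup M] [Module R M]

/-- π-power torsion submodule -/
def TT (π : R) (M : Type) [AddCommGroup M] [Module R M] : Submodule R M where
  carrier := {m | ∃ n : ℕ, π ^ n • m = 0}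
  zero_mem' := ⟨0, by simp⟩
  add_mem' := by
    rintro a b ⟨n, hn⟩ ⟨k, hk⟩
    refine ⟨n + k, ?_⟩
    rw [smul_add]
    have h1 : π ^ (n + k) • a = 0 := by rw [add_comm, pow_add, mul_smul, hn, smul_zero]
    have h2 : π ^ (n + k) • b = 0 := by rw [pow_add, mul_smul, hk, smul_zero]
    rw [h1, h2, add_zero]
  smul_mem' := by
    rintro c a ⟨n, hn⟩
    exact ⟨n, by rw [smul_comm, hn, smul_zero]⟩

lemma mem_TT {π : R} {m : M} : m ∈ TT π M ↔ ∃ n : ℕ, π ^ n • m = 0 := Iff.rfl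

variable (π : R)

lemma eq_zero_of_eq_pi_smul (e : R) (y : M) (n : ℕ) (hn : π ^ n • y = 0)
    (h : y = (π * e) • y) : y = 0 := by
  have key : ∀ k : ℕ, y = ((π * e) ^ k) • y := by
    intro k
    induction k with
    | zero => simp
    | succ j ih =>
      conv_rhs => rw [pow_succ, mul_smul, ← h]
      exact ih
  have h2 := key n
  rw [mul_pow, mul_comm (π ^ n), mul_smul, hn, smul_zero] at h2
  exact h2

variable (hunit : ∀ s : R, s ∉ Ideal.span ({π} : Set R) → ∃ c d : R, s * c = 1 + π * d)

include hunit in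
lemma pi_dvd_of_smul_eq_zero (y : M) (r : R) (n : ℕ) (hn : π ^ n • y = 0)
    (hy : y ≠ 0) (hr : r • y = 0) : π ∣ r := by
  by_contra hnd
  have hrs : r ∉ Ideal.span ({π} : Set R) := fun h => hnd (Ideal.mem_span_singleton.mp h)
  obtain ⟨c, d, hcd⟩ := hunit r hrs
  have h1 : ((1 : R) + π * d) • y = 0 := by
    rw [← hcd, mul_comm, mul_smul, hr, smul_zero]
  rw [add_smul, one_smul] at h1
  have h2 : y = (π * (-d)) • y := by
    have h3 := eq_neg_of_add_eq_zero_left h1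
    have h4 : (π * (-d)) • y = -((π * d) • y) := by
      rw [← neg_smul]
      congr 1
      ring
    rw [h4]
    exact h3
  exact hy (eq_zero_of_eq_pi_smul π (-d) y n hn h2)

include hunit in
/-- annihilator lemma: element of exact order j+1 has annihilator (π^(j+1)) -/
lemma ann_lemma : ∀ (j : ℕ) (y : M) (r : R), π ^ (j+1) • y = 0 → π ^ j • y ≠ 0 →
    r • y = 0 → π ^ (j+1) ∣ r := by
  intro j
  induction j with
  | zero =>
    intro y r h1 h0 hr
    rw [pow_zero, one_smul] at h0
    rw [pow_one]
    exact pi_dvd_of_smul_eq_zero π hunit y r 1 (by simpa using h1) h0 hr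
  | succ n ih =>
    intro y r h1 h0 hr
    have hy0 : y ≠ 0 := by rintro rfl; exact h0 (smul_zero _)
    obtain ⟨r', rfl⟩ := pi_dvd_of_smul_eq_zero π hunit y r (n+2) h1 hy0 hr
    have h1' : π ^ (n+1) • (π • y) = 0 := by rw [smul_smul, ← pow_succ]; exact h1
    have h0' : π ^ n • (π • y) ≠ 0 := by rw [smul_smul, ← pow_succ]; exact h0
    have hr' : r' • (π • y) = 0 := by rw [smul_smul, mul_comm r' π]; exact hr
    obtain ⟨s, rfl⟩ := ih (π • y) r' h1' h0' hr'
    exact ⟨s, by ring⟩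

variable (E1 : ∀ y z : M, π • y = 0 → y ≠ 0 → π • z = 0 → ∃ a : ℤ, z = a • y)

include E1 in
/-- cyclicity: bounded torsion with 1-dim socle is cyclic -/
lemma cyclic_lemma (x : M) (L : ℕ) (hx1 : π ^ (L+1) • x = 0) (hx0 : π ^ L • x ≠ 0) :
    ∀ j : ℕ, j ≤ L + 1 → ∀ y : M, π ^ j • y = 0 → ∃ r : R, y = r • x := by
  intro j
  induction j with
  | zero =>
    intro _ y hy
    rw [pow_zero, one_smul] at hy
    exact ⟨0, by rw [hy, zero_smul]⟩
  | succ n ih =>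
    intro hn y hy
    have hsoc : π • (π ^ L • x) = 0 := by rw [smul_smul, ← pow_succ']; exact hx1
    have hzy : π • (π ^ n • y) = 0 := by rw [smul_smul, ← pow_succ']; exact hy
    obtain ⟨a, ha⟩ := E1 (π ^ L • x) (π ^ n • y) hsoc hx0 hzy
    set b : R := ((a : ℤ) : R) with hb
    have hab : (a : ℤ) • (π ^ L • x) = (b * π ^ L) • x := by
      rw [mul_smul, Int.cast_smul_eq_zsmul]
    have hmul : π ^ n * (b * π ^ (L - n)) = b * π ^ L := by
      have hπp : π ^ n * π ^ (L - n) = π ^ L := by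
        rw [← pow_add]
        congr 1
        omega
      rw [← hπp]
      ring
    have key : π ^ n • (y - (b * π ^ (L - n)) • x) = 0 := by
      rw [smul_sub, smul_smul, ha, hab, hmul, sub_self]
    obtain ⟨r, hr⟩ := ih (by omega) _ key
    refine ⟨r + b * π ^ (L - n), ?_⟩
    rw [add_smul, ← hr]
    abel


variable (p : ℕ) (v : R) (hπv : π ^ (p-1) = (p : R) * v)

include hπv in
lemma sur_lemma (M' : Submodule R M)
    (h : ∀ m : M, ∃ z : M, ∃ t ∈ M', m = π • z + t) :
    Function.Surjective (fun x : M ⧸ M' => p • x) := by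
  have hk : ∀ (k : ℕ) (m : M), ∃ z : M, ∃ t ∈ M', m = π ^ k • z + t := by
    intro k
    induction k with
    | zero => intro m; exact ⟨m, 0, M'.zero_mem, by simp⟩
    | succ n ihn =>
      intro m
      obtain ⟨z, t, ht, hm⟩ := ihn m
      obtain ⟨z', t', ht', hz⟩ := h z
      refine ⟨z', π ^ n • t' + t, M'.add_mem (M'.smul_mem _ ht') ht, ?_⟩
      rw [hm, hz, smul_add, smul_smul, ← pow_succ]
      abel
  intro xq
  obtain ⟨m, rfl⟩ := Submodule.Quotient.mk_surjective M' xq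
  obtain ⟨z, t, ht, hm⟩ := hk (p - 1) m
  refine ⟨Submodule.Quotient.mk (v • z), ?_⟩
  show p • (Submodule.Quotient.mk (v • z) : M ⧸ M') = _
  have h1 : p • (Submodule.Quotient.mk (v • z) : M ⧸ M') =
      Submodule.Quotient.mk (p • (v • z)) := by
    rw [← Submodule.mkQ_apply, ← map_nsmul, Submodule.mkQ_apply]
  have h2 : p • (v • z) = π ^ (p - 1) • z := by
    rw [hπv, mul_smul, Nat.cast_smul_eq_nsmul]
  rw [h1, h2]
  rw [Submodule.Quotient.eq]
  rw [hm]
  simpa using M'.neg_mem ht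

lemma pinj_of_TT (M' : Submodule R M) (hTM : TT π M ≤ M')
    (hstep : ∀ y : M, (p : R) • y ∈ M' → y ∈ M') :
    Function.Injective (fun x : M ⧸ M' => p • x) := by
  have h0 : ∀ c : M ⧸ M', p • c = 0 → c = 0 := by
    intro c hc
    obtain ⟨y, rfl⟩ := Submodule.Quotient.mk_surjective M' c
    have h1 : (p • (Submodule.Quotient.mk y : M ⧸ M')) = Submodule.Quotient.mk (p • y) := by
      rw [← Submodule.mkQ_apply, ← map_nsmul, Submodule.mkQ_apply]
    rw [h1, Submodule.Quotient.mk_eq_zero] at hc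
    rw [Submodule.Quotient.mk_eq_zero]
    apply hstep
    rwa [Nat.cast_smul_eq_nsmul]
  intro a b hab
  have h2 : p • (a - b) = 0 := by
    have : (p : R) • (a - b) = (p : R) • a - (p : R) • b := smul_sub _ _ _
    rw [Nat.cast_smul_eq_nsmul, Nat.cast_smul_eq_nsmul, Nat.cast_smul_eq_nsmul] at this
    simp only at hab
    rw [this, hab, sub_self]
  have := h0 _ h2
  exact sub_eq_zero.mp this

include hunit E1 hπv in
theorem caseA
    (hA : ∃ n : ℕ, ∀ m : M, π ^ (n+1) • m = 0 → π ^ n • m = 0)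
    (E4 : ∃ y : M, π • y = 0 ∧ y ≠ 0)
    (E3 : ∀ m : M, m ∉ LinearMap.range (LinearMap.lsmul R M π) →
      ∀ n : M, ∃ a : ℤ, n - a • m ∈ LinearMap.range (LinearMap.lsmul R M π)) :
    ∃ M' : Submodule R M, Function.Bijective (fun x : M ⧸ M' => p • x) ∧
      ∃ ℓ : ℕ, 1 ≤ ℓ ∧ Nonempty (M' ≃ₗ[R] (R ⧸ Ideal.span ({π ^ ℓ} : Set R))) := by
  classical
  set ℓ := Nat.find hA with hℓdef
  have hPℓ : ∀ m : M, π ^ (ℓ+1) • m = 0 → π ^ ℓ • m = 0 := Nat.find_spec hA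
  have hℓ1 : 1 ≤ ℓ := by
    rcases Nat.eq_zero_or_pos ℓ with h0 | h1
    · exfalso
      obtain ⟨y, hy1, hy0⟩ := E4
      have := (h0 ▸ hPℓ) y (by simpa using hy1)
      rw [pow_zero, one_smul] at this
      exact hy0 this
    · exact h1
  -- stabilization
  have hstab0 : ∀ (j : ℕ) (m : M), π ^ (ℓ + j) • m = 0 → π ^ ℓ • m = 0 := by
    intro j
    induction j with
    | zero => intro m hm; simpa using hm
    | succ n ihn =>
      intro m hm
      have h1 : π ^ (ℓ + n) • (π • m) = 0 := by
        rw [smul_smul]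
        have : π ^ (ℓ + n) * π = π ^ (ℓ + (n+1)) := by rw [← pow_succ]; ring_nf
        rw [this]
        exact hm
      have h2 := ihn (π • m) h1
      apply hPℓ
      rw [smul_smul] at h2
      rw [pow_succ]
      exact h2
  have hstab : ∀ t : M, (∃ k : ℕ, π ^ k • t = 0) → π ^ ℓ • t = 0 := by
    rintro t ⟨k, hk⟩
    rcases le_or_gt k ℓ with h | h
    · have : π ^ ℓ • t = π ^ (ℓ - k) • (π ^ k • t) := by
        rw [smul_smul, ← pow_add]
        congr 2
        omega
      rw [this, hk, smul_zero]
    · have : ℓ + (k - ℓ) = k := by omega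
      exact hstab0 (k - ℓ) t (by rw [this]; exact hk)
  -- element of exact order ℓ
  have hmin : ¬ (∀ m : M, π ^ ((ℓ-1)+1) • m = 0 → π ^ (ℓ-1) • m = 0) :=
    Nat.find_min hA (by omega)
  push_neg at hmin
  obtain ⟨x, hx1, hx0⟩ := hmin
  have hℓeq : (ℓ - 1) + 1 = ℓ := by omega
  rw [hℓeq] at hx1
  refine ⟨TT π M, ⟨?_, ?_⟩, ℓ, hℓ1, ?_⟩
  · -- injective
    apply pinj_of_TT π p (TT π M) le_rfl
    intro y hy
    rw [mem_TT] at hy ⊢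
    obtain ⟨k, hk⟩ := hy
    refine ⟨k + (p - 1), ?_⟩
    have h1 : π ^ (k + (p-1)) • y = π ^ k • (((p:R) * v) • y) := by
      rw [smul_smul, ← hπv, ← pow_add]
    have h2 : ((p:R) * v) • y = v • ((p:R) • y) := by rw [mul_comm, mul_smul]
    rw [h1, h2, smul_comm, hk, smul_zero]
  · -- surjective
    have hxnr : x ∉ LinearMap.range (LinearMap.lsmul R M π) := by
      rintro ⟨y, hy⟩
      simp only [LinearMap.lsmul_apply] at hy
      have h1 : π ^ (ℓ + 1) • y = 0 := by
        have : π ^ (ℓ+1) • y = π ^ ℓ • (π • y) := by rw [smul_smul, ← pow_succ]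
        rw [this, hy]
        exact hstab x ⟨ℓ, hx1⟩
      have h2 := hPℓ y h1
      apply hx0
      have : π ^ (ℓ - 1) • x = π ^ ℓ • y := by
        rw [← hy, smul_smul, ← pow_succ, hℓeq]
      rw [this, h2]
    apply sur_lemma π p v hπv
    intro m
    obtain ⟨a, ha⟩ := E3 x hxnr m
    obtain ⟨z, hz⟩ := ha
    simp only [LinearMap.lsmul_apply] at hz
    refine ⟨z, a • x, zsmul_mem (⟨ℓ, hx1⟩ : x ∈ TT π M) a, ?_⟩
    rw [hz]
    abel
  · -- the equivalence
    set f := LinearMap.toSpanSingleton R M x with hf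
    have hkerf : LinearMap.ker f = Ideal.span ({π ^ ℓ} : Set R) := by
      ext r
      rw [LinearMap.mem_ker, Ideal.mem_span_singleton]
      constructor
      · intro hr
        have := ann_lemma π hunit (ℓ - 1) x r (by rwa [hℓeq]) hx0 hr
        rwa [hℓeq] at this
      · rintro ⟨c, rfl⟩
        show (π ^ ℓ * c) • x = 0
        rw [mul_comm, mul_smul, hx1, smul_zero]
    have hTTspan : TT π M = Submodule.span R ({x} : Set M) := by
      apply le_antisymm
      · intro t ht
        rw [mem_TT] at ht
        have h1 := hstab t ht
        obtain ⟨r, hr⟩ := cyclic_lemma π E1 x (ℓ - 1) (by rwa [hℓeq]) hx0 ℓ (by omega) t h1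
        rw [Submodule.mem_span_singleton]
        exact ⟨r, hr.symm⟩
      · rw [Submodule.span_le]
        intro y hy
        rw [Set.mem_singleton_iff] at hy
        subst hy
        show y ∈ TT π M
        exact ⟨ℓ, hx1⟩
    have e1 : (R ⧸ LinearMap.ker f) ≃ₗ[R] LinearMap.range f := f.quotKerEquivRange
    have e2 : TT π M ≃ₗ[R] LinearMap.range f :=
      LinearEquiv.ofEq _ _ (hTTspan.trans (LinearMap.span_singleton_eq_range R M x))
    exact ⟨e2.trans (e1.symm.trans (Submodule.quotEquivOfEq _ _ hkerf))⟩


include E1 in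
lemma div_lemma (hB : ∀ n : ℕ, ∃ m : M, π ^ (n+1) • m = 0 ∧ π ^ n • m ≠ 0) :
    ∀ (k : ℕ) (t : M), π ^ k • t = 0 → ∃ s : M, π • s = t ∧ π ^ (k+1) • s = 0 := by
  intro k
  induction k with
  | zero =>
    intro t ht
    rw [pow_zero, one_smul] at ht
    exact ⟨0, by rw [ht, smul_zero], by rw [smul_zero]⟩
  | succ n ihn =>
    intro t ht
    obtain ⟨y, hy1, hy0⟩ := hB (n+1)
    have hsoc0 : π • (π ^ (n+1) • y) = 0 := by rw [smul_smul, ← pow_succ']; exact hy1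
    have hzt : π • (π ^ n • t) = 0 := by rw [smul_smul, ← pow_succ']; exact ht
    obtain ⟨a, ha⟩ := E1 (π ^ (n+1) • y) (π ^ n • t) hsoc0 hy0 hzt
    have key : π ^ n • (t - π • ((a : ℤ) • y)) = 0 := by
      have hc : π ^ n • (π • ((a:ℤ) • y)) = (a:ℤ) • (π ^ (n+1) • y) := by
        rw [smul_comm π (a:ℤ), smul_comm (π ^ n) (a:ℤ), smul_smul, ← pow_succ]
      rw [smul_sub, ha, hc, sub_self]
    obtain ⟨z, hz1, hz2⟩ := ihn _ key
    refine ⟨(a:ℤ) • y + z, ?_, ?_⟩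
    · rw [smul_add, hz1]; abel
    · rw [smul_add]
      have hzy : π ^ (n+1+1) • ((a:ℤ) • y) = 0 := by rw [smul_comm, hy1, smul_zero]
      have hz3 : π ^ (n+1+1) • z = 0 := by
        rw [pow_succ', mul_smul, hz2, smul_zero]
      rw [hzy, hz3, add_zero]

include E1 in
lemma exists_seq (hB : ∀ n : ℕ, ∃ m : M, π ^ (n+1) • m = 0 ∧ π ^ n • m ≠ 0)
    (E4 : ∃ y : M, π • y = 0 ∧ y ≠ 0) :
    ∃ x : ℕ → M, (∀ k, π ^ (k+1) • x k = 0) ∧ (∀ k, π • x (k+1) = x k) ∧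
      (∀ k, π ^ k • x k = x 0) ∧ x 0 ≠ 0 := by
  obtain ⟨y1, hy1, hy1ne⟩ := E4
  choose F hF1 hF2 using div_lemma π E1 hB
  let S : ∀ k : ℕ, {m : M // π ^ (k+1) • m = 0} := fun k =>
    Nat.rec ⟨y1, by simpa [pow_one] using hy1⟩
      (fun n prev => ⟨F (n+1) prev.1 prev.2, hF2 (n+1) prev.1 prev.2⟩) k
  refine ⟨fun k => (S k).1, fun k => (S k).2, fun k => hF1 (k+1) (S k).1 (S k).2, ?_, hy1ne⟩
  intro k
  induction k with
  | zero => simp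
  | succ n ihn =>
    have h1 : π • (S (n+1)).1 = (S n).1 := hF1 (n+1) (S n).1 (S n).2
    rw [pow_succ, mul_smul, h1]
    exact ihn

lemma iter_seq {A : Type} [AddCommGroup A] [Module R A] (w : ℕ → A)
    (hw : ∀ k, π • w (k+1) = w k) : ∀ (d k : ℕ), w k = π ^ d • w (k + d) := by
  intro d
  induction d with
  | zero => intro k; simp
  | succ n ihn =>
    intro k
    have h1 := ihn (k+1)
    have h2 : k + 1 + n = k + (n+1) := by omega
    rw [h2] at h1
    calc w k = π • w (k+1) := (hw k).symm
    _ = π • (π ^ n • w (k + (n+1))) := by rw [← h1]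
    _ = π ^ (n+1) • w (k + (n+1)) := by rw [smul_smul, ← pow_succ']


variable {QQ : Type} [AddCommGroup QQ] [Module R QQ]

include hunit E1 hπv in
theorem caseB
    (hKrull : ∀ r : R, (∀ n : ℕ, π ^ n ∣ r) → r = 0)
    (q : ℕ → QQ) (hq0 : ∀ k, π • q (k+1) = q k)
    (hqann : ∀ (k : ℕ) (r : R), r • q k = 0 ↔ π ^ k ∣ r)
    (hqgen : ∀ z : QQ, ∃ (k : ℕ) (r : R), z = r • q k)
    (hB : ∀ n : ℕ, ∃ m : M, π ^ (n+1) • m = 0 ∧ π ^ n • m ≠ 0)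
    (E4 : ∃ y : M, π • y = 0 ∧ y ≠ 0)
    (E2 : ∃ m : M, m ∉ LinearMap.range (LinearMap.lsmul R M π))
    (E3 : ∀ m : M, m ∉ LinearMap.range (LinearMap.lsmul R M π) →
      ∀ n : M, ∃ a : ℤ, n - a • m ∈ LinearMap.range (LinearMap.lsmul R M π)) :
    ∃ M' : Submodule R M, Function.Bijective (fun x : M ⧸ M' => p • x) ∧
      Nonempty (M' ≃ₗ[R] (R × QQ)) := by
  obtain ⟨x, hxann, hxrel, hxord, hx0ne⟩ := exists_seq π E1 hB E4
  -- the shifted sequence X with X 0 = 0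
  set X : ℕ → M := fun k => Nat.casesOn k 0 x with hX
  have hXs : ∀ k, X (k+1) = x k := fun k => rfl
  have hXrel : ∀ k, π • X (k+1) = X k := by
    intro k
    cases k with
    | zero =>
      show π • x 0 = (0 : M)
      have := hxann 0
      simpa [pow_one] using this
    | succ n => exact hxrel n
  have hXtor : ∀ k, π ^ k • X k = 0 := by
    intro k
    cases k with
    | zero => show π ^ 0 • (0:M) = 0; rw [smul_zero]
    | succ n => exact hxann n
  have hXiter := iter_seq π X hXrel
  have hqiter := iter_seq π q hq0
  have hXann2 : ∀ (k : ℕ) (r : R), π ^ k ∣ r → r • X k = 0 := by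
    rintro k r ⟨c, rfl⟩
    rw [mul_comm, mul_smul, hXtor, smul_zero]
  have hXann1 : ∀ (k : ℕ) (r : R), r • X k = 0 → π ^ k ∣ r := by
    intro k r h
    cases k with
    | zero => exact ⟨r, by rw [pow_zero, one_mul]⟩
    | succ n =>
      refine ann_lemma π hunit n (x n) r (hxann n) ?_ h
      rw [hxord n]
      exact hx0ne
  have hTTgen : ∀ t : M, t ∈ TT π M → ∃ (k : ℕ) (r : R), t = r • X k := by
    rintro t ⟨k, hk⟩
    have hord : π ^ k • x k ≠ 0 := by rw [hxord k]; exact hx0ne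
    obtain ⟨r, hr⟩ := cyclic_lemma π E1 (x k) k (hxann k) hord k (by omega) t hk
    exact ⟨k+1, r, by rw [hXs]; exact hr⟩
  -- well-definedness of the transfer map
  have Waux : ∀ (k k' : ℕ) (r r' : R), k ≤ k' → r • q k = r' • q k' → r • X k = r' • X k' := by
    intro k k' r r' hkk h
    have hd : k + (k' - k) = k' := by omega
    have h1 : q k = π ^ (k' - k) • q k' := by have := hqiter (k'-k) k; rwa [hd] at this
    have h2 : X k = π ^ (k' - k) • X k' := by have := hXiter (k'-k) k; rwa [hd] at this
    have h3 : (r * π ^ (k' - k) - r') • q k' = 0 := by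
      rw [sub_smul, mul_smul, ← h1, h, sub_self]
    have h4 := (hqann k' _).mp h3
    have h5 := hXann2 k' _ h4
    rw [sub_smul, mul_smul, ← h2] at h5
    exact sub_eq_zero.mp h5
  have W : ∀ (k k' : ℕ) (r r' : R), r • q k = r' • q k' → r • X k = r' • X k' := by
    intro k k' r r' h
    rcases le_total k k' with hle | hle
    · exact Waux k k' r r' hle h
    · exact (Waux k' k r' r hle h.symm).symm
  choose Gk Gr hG using hqgen
  set h : QQ → M := fun z => Gr z • X (Gk z) with hh
  have hrep : ∀ (z : QQ) (k : ℕ) (r : R), z = r • q k → h z = r • X k := by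
    intro z k r hz
    exact W (Gk z) k (Gr z) r (by rw [← hG z, ← hz])
  have hliftq : ∀ (k K : ℕ) (r : R), k ≤ K → r • q k = (r * π ^ (K - k)) • q K := by
    intro k K r hkK
    have hd : k + (K - k) = K := by omega
    have h2 := hqiter (K - k) k
    rw [hd] at h2
    rw [h2, smul_smul]
  have hadd : ∀ z z', h (z + z') = h z + h z' := by
    intro z z'
    set K := max (Gk z) (Gk z') with hK
    have h1 : z = (Gr z * π ^ (K - Gk z)) • q K := by
      rw [← hliftq _ _ _ (le_max_left _ _)]; exact hG z
    have h2 : z' = (Gr z' * π ^ (K - Gk z')) • q K := by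
      rw [← hliftq _ _ _ (le_max_right _ _)]; exact hG z'
    have h3 : z + z' = (Gr z * π ^ (K - Gk z) + Gr z' * π ^ (K - Gk z')) • q K := by
      rw [add_smul, ← h1, ← h2]
    rw [hrep _ _ _ h3, add_smul, hrep z K _ h1, hrep z' K _ h2]
  have hsmul : ∀ (s : R) (z : QQ), h (s • z) = s • h z := by
    intro s z
    have h1 : s • z = (s * Gr z) • q (Gk z) := by rw [mul_smul, ← hG]
    rw [hrep _ _ _ h1, mul_smul]
  set H : QQ →ₗ[R] M := { toFun := h, map_add' := hadd, map_smul' := hsmul } with hH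
  have hHapp : ∀ z, H z = h z := fun z => rfl
  have hHinj : Function.Injective H := by
    have hker0 : ∀ z, H z = 0 → z = 0 := by
      intro z hz
      rw [hHapp] at hz
      have h2 := hXann1 _ _ hz
      have h3 := (hqann (Gk z) (Gr z)).mpr h2
      rw [hG z]
      exact h3
    intro a b hab
    have := hker0 (a - b) (by rw [map_sub, hab, sub_self])
    exact sub_eq_zero.mp this
  have hHrange : LinearMap.range H = TT π M := by
    apply le_antisymm
    · rintro _ ⟨z, rfl⟩
      show h z ∈ TT π M
      exact Submodule.smul_mem _ _ ⟨Gk z, hXtor (Gk z)⟩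
    · intro t ht
      obtain ⟨k, r, hkr⟩ := hTTgen t ht
      refine ⟨r • q k, ?_⟩
      rw [hHapp, hrep _ _ _ rfl, ← hkr]
  -- choice of free generator
  obtain ⟨m₀, hm₀⟩ := E2
  have hTTle : TT π M ≤ LinearMap.range (LinearMap.lsmul R M π) := by
    rintro t ⟨k, hk⟩
    obtain ⟨s, hs, _⟩ := div_lemma π E1 hB k t hk
    exact ⟨s, by simpa using hs⟩
  have D1 : ∀ r : R, r • m₀ ∈ TT π M → π ∣ r := by
    intro r hr
    by_contra hnd
    obtain ⟨c, d, hcd⟩ := hunit r (fun hmem => hnd (Ideal.mem_span_singleton.mp hmem))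
    apply hm₀
    have h2 : (r * c) • m₀ = m₀ + π • (d • m₀) := by
      rw [hcd, add_smul, one_smul, mul_smul]
    rw [mul_comm, mul_smul] at h2
    have h1 : m₀ = c • (r • m₀) - π • (d • m₀) := by rw [h2]; abel
    rw [h1]
    apply Submodule.sub_mem
    · exact Submodule.smul_mem _ c (hTTle hr)
    · exact ⟨d • m₀, rfl⟩
  have Dall : ∀ r : R, r • m₀ ∈ TT π M → r = 0 := by
    have key : ∀ (n : ℕ) (r : R), r • m₀ ∈ TT π M → π ^ n ∣ r := by
      intro n
      induction n with
      | zero => intro r _; exact ⟨r, by rw [pow_zero, one_mul]⟩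
      | succ n ihn =>
        intro r hr
        obtain ⟨s, rfl⟩ := ihn r hr
        have hs : s • m₀ ∈ TT π M := by
          obtain ⟨k, hk⟩ := hr
          refine ⟨k + n, ?_⟩
          have he : π ^ (k+n) • (s • m₀) = π ^ k • ((π ^ n * s) • m₀) := by
            rw [smul_smul, smul_smul, ← mul_assoc, ← pow_add]
          rw [he, hk]
        obtain ⟨c, rfl⟩ := D1 s hs
        exact ⟨c, by ring⟩
    exact fun r hr => hKrull r (fun n => key n r hr)
  set Ψ : R × QQ →ₗ[R] M := (LinearMap.toSpanSingleton R M m₀).coprod H with hΨ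
  have hΨapp : ∀ (r : R) (z : QQ), Ψ (r, z) = r • m₀ + H z := fun r z => rfl
  have hΨinj : Function.Injective Ψ := by
    have hker0 : ∀ u : R × QQ, Ψ u = 0 → u = 0 := by
      rintro ⟨r, z⟩ hu
      rw [hΨapp] at hu
      have h1 : r • m₀ = -(H z) := eq_neg_of_add_eq_zero_left hu
      have hHz : H z ∈ TT π M := by
        have : H z ∈ LinearMap.range H := LinearMap.mem_range_self H z
        rwa [hHrange] at this
      have h2 : r • m₀ ∈ TT π M := by rw [h1]; exact Submodule.neg_mem _ hHz
      have hr0 : r = 0 := Dall r h2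
      subst hr0
      rw [zero_smul, zero_add] at hu
      have hz0 : z = 0 := hHinj (by rw [hu, map_zero])
      rw [hz0]
      rfl
    intro a b hab
    have := hker0 (a - b) (by rw [map_sub, hab, sub_self])
    exact sub_eq_zero.mp this
  set M' : Submodule R M := TT π M ⊔ Submodule.span R ({m₀} : Set M) with hM'
  have hrangeΨ : LinearMap.range Ψ = M' := by
    rw [hΨ, LinearMap.range_coprod, ← LinearMap.span_singleton_eq_range, hHrange, hM']
    exact sup_comm _ _
  have hequiv : Nonempty (M' ≃ₗ[R] (R × QQ)) :=
    ⟨((LinearEquiv.ofInjective Ψ hΨinj).trans (LinearEquiv.ofEq _ _ hrangeΨ)).symm⟩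
  -- step-down lemma
  have I1 : ∀ y : M, π • y ∈ M' → y ∈ M' := by
    intro y hy
    rw [hM', Submodule.mem_sup] at hy
    obtain ⟨t, ht, u, hu, htu⟩ := hy
    obtain ⟨s, hs⟩ := Submodule.mem_span_singleton.mp hu
    obtain ⟨k, hk⟩ := ht
    obtain ⟨t', ht'1, ht'2⟩ := div_lemma π E1 hB k t hk
    have hπs : π ∣ s := by
      by_contra hnd
      obtain ⟨c, d, hcd⟩ := hunit s (fun hmem => hnd (Ideal.mem_span_singleton.mp hmem))
      apply hm₀
      have h1 : s • m₀ = π • (y - t') := by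
        rw [smul_sub, ht'1, hs, eq_sub_iff_add_eq, add_comm]
        exact htu
      have h2 : (s * c) • m₀ = m₀ + π • (d • m₀) := by
        rw [hcd, add_smul, one_smul, mul_smul]
      rw [mul_comm, mul_smul, h1] at h2
      have h3 : m₀ = c • (π • (y - t')) - π • (d • m₀) := by
        rw [h2]
        abel
      rw [h3]
      apply Submodule.sub_mem
      · exact ⟨c • (y - t'), by rw [LinearMap.lsmul_apply]; exact smul_comm π c _⟩
      · exact ⟨d • m₀, rfl⟩
    obtain ⟨s', rfl⟩ := hπs
    have hw : π • (y - t' - s' • m₀) = 0 := by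
      have h2 : π • (s' • m₀) = (π * s') • m₀ := by rw [mul_smul]
      rw [smul_sub, smul_sub, ht'1, h2, hs, ← htu]
      abel
    have hyw : y = (y - t' - s' • m₀) + t' + s' • m₀ := by abel
    rw [hM', hyw]
    refine Submodule.add_mem _ (Submodule.add_mem _ ?_ ?_) ?_
    · exact Submodule.mem_sup_left ⟨1, by rwa [pow_one]⟩
    · exact Submodule.mem_sup_left ⟨k+1, ht'2⟩
    · exact Submodule.mem_sup_right
        (Submodule.smul_mem _ _ (Submodule.mem_span_singleton_self m₀))
  have Ik : ∀ (k : ℕ) (y : M), π ^ k • y ∈ M' → y ∈ M' := by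
    intro k
    induction k with
    | zero => intro y hy; simpa using hy
    | succ n ihn =>
      intro y hy
      have h1 : π ^ n • (π • y) ∈ M' := by rw [smul_smul, ← pow_succ]; exact hy
      exact I1 y (ihn _ h1)
  refine ⟨M', ⟨?_, ?_⟩, hequiv⟩
  · -- injective
    apply pinj_of_TT π p M' le_sup_left
    intro y hy
    apply Ik (p - 1) y
    have h1 : π ^ (p-1) • y = v • ((p:R) • y) := by
      rw [hπv, mul_comm, mul_smul]
    rw [h1]
    exact Submodule.smul_mem _ _ hy
  · -- surjective
    apply sur_lemma π p v hπv
    intro m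
    obtain ⟨a, ha⟩ := E3 m₀ hm₀ m
    obtain ⟨z, hz⟩ := ha
    simp only [LinearMap.lsmul_apply] at hz
    refine ⟨z, a • m₀, ?_, by rw [hz]; abel⟩
    rw [hM']
    exact Submodule.mem_sup_right (zsmul_mem (Submodule.mem_span_singleton_self m₀) a)


include hunit E1 hπv in
theorem abstract19
    (hKrull : ∀ r : R, (∀ n : ℕ, π ^ n ∣ r) → r = 0)
    (q : ℕ → QQ) (hq0 : ∀ k, π • q (k+1) = q k)
    (hqann : ∀ (k : ℕ) (r : R), r • q k = 0 ↔ π ^ k ∣ r)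
    (hqgen : ∀ z : QQ, ∃ (k : ℕ) (r : R), z = r • q k)
    (E4 : ∃ y : M, π • y = 0 ∧ y ≠ 0)
    (E2 : ∃ m : M, m ∉ LinearMap.range (LinearMap.lsmul R M π))
    (E3 : ∀ m : M, m ∉ LinearMap.range (LinearMap.lsmul R M π) →
      ∀ n : M, ∃ a : ℤ, n - a • m ∈ LinearMap.range (LinearMap.lsmul R M π)) :
    ∃ M' : Submodule R M, Function.Bijective (fun x : M ⧸ M' => p • x) ∧
      ((∃ ℓ : ℕ, 1 ≤ ℓ ∧ Nonempty (M' ≃ₗ[R] (R ⧸ Ideal.span ({π ^ ℓ} : Set R)))) ∨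
        Nonempty (M' ≃ₗ[R] (R × QQ))) := by
  by_cases hA : ∃ n : ℕ, ∀ m : M, π ^ (n+1) • m = 0 → π ^ n • m = 0
  · obtain ⟨M', hb, hl⟩ := caseA π hunit E1 p v hπv hA E4 E3
    exact ⟨M', hb, Or.inl hl⟩
  · push_neg at hA
    obtain ⟨M', hb, he⟩ := caseB π hunit E1 p v hπv hKrull q hq0 hqann hqgen hA E4 E2 E3
    exact ⟨M', hb, Or.inr he⟩

end S19A

/-- The ring `ℤ[ϑ, 1/p]`, the localization of `ℤ[ϑ]` at `p`. -/
abbrev LocP (p : ℕ) : Type := Localization.Away ((p : Rtheta p))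

/-- The `ℤ[ϑ]`-submodule `(1 − ϑ)·ℤ[ϑ]` of `ℤ[ϑ, 1/p]`. -/
noncomputable def idealSub (p : ℕ) : Submodule (Rtheta p) (LocP p) :=
  Submodule.span (Rtheta p) {algebraMap (Rtheta p) (LocP p) (1 - thetaEl p)}

noncomputable instance (p : ℕ) : HasQuotient (LocP p) (Submodule (Rtheta p) (LocP p)) :=
  Submodule.hasQuotient

/-- `Q = ℤ[ϑ, 1/p]/((1 − ϑ)·ℤ[ϑ])` as a `ℤ[ϑ]`-module. -/
abbrev Qmod (p : ℕ) : Type := LocP p ⧸ idealSub p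

namespace S19I
open S19

variable (p : ℕ) [hpf : Fact p.Prime]

lemma pi_dvd_p : ∃ c : Rtheta p, ((p : ℕ) : Rtheta p) = (1 - thetaEl p) * c := by
  have h : eps p ((p : ℕ) : Rtheta p) = 0 := by
    rw [map_natCast]
    exact ZMod.natCast_self p
  obtain ⟨c, hc⟩ := Ideal.mem_span_singleton.mp (eps_eq_zero_mem p _ h)
  exact ⟨c, hc⟩

noncomputable abbrev algR : Rtheta p →+* LocP p := algebraMap (Rtheta p) (LocP p)

lemma algR_inj : Function.Injective (algR p) :=
  IsLocalization.injective (LocP p) (powers_le_nonZeroDivisors_of_noZeroDivisors (p_ne_zero p))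

lemma smul_loc (r : Rtheta p) (x : LocP p) : r • x = algR p r * x := Algebra.smul_def r x

noncomputable def w0 : LocP p := IsLocalization.Away.invSelf (S := LocP p) ((p : ℕ) : Rtheta p)

lemma hw0 : algR p ((p:ℕ) : Rtheta p) * w0 p = 1 :=
  IsLocalization.Away.mul_invSelf (S := LocP p) ((p : ℕ) : Rtheta p)

noncomputable def cEl : Rtheta p := Classical.choose (pi_dvd_p p)

lemma cEl_spec : ((p : ℕ) : Rtheta p) = (1 - thetaEl p) * cEl p := Classical.choose_spec (pi_dvd_p p)

noncomputable def piInv : LocP p := algR p (cEl p) * w0 p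

lemma piInv_spec : algR p (1 - thetaEl p) * piInv p = 1 := by
  rw [piInv, ← mul_assoc, ← map_mul, ← cEl_spec, hw0]

noncomputable def qSeq (k : ℕ) : Qmod p :=
  Submodule.Quotient.mk (piInv p ^ k * algR p (1 - thetaEl p))

lemma qSeq_rel (k : ℕ) : (1 - thetaEl p) • qSeq p (k+1) = qSeq p k := by
  rw [qSeq, qSeq, ← Submodule.Quotient.mk_smul]
  congr 1
  rw [smul_loc]
  have : algR p (1 - thetaEl p) * (piInv p ^ (k+1) * algR p (1 - thetaEl p)) =
      (algR p (1 - thetaEl p) * piInv p) * (piInv p ^ k * algR p (1 - thetaEl p)) := by ring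
  rw [this, piInv_spec, one_mul]

lemma qSeq_ann (k : ℕ) (r : Rtheta p) :
    r • qSeq p k = 0 ↔ (1 - thetaEl p) ^ k ∣ r := by
  have hmk : r • qSeq p k =
      Submodule.Quotient.mk (algR p r * (piInv p ^ k * algR p (1 - thetaEl p))) := by
    rw [qSeq, ← Submodule.Quotient.mk_smul]
    congr 1
    rw [smul_loc]
  rw [hmk, Submodule.Quotient.mk_eq_zero]
  constructor
  · intro hmem
    obtain ⟨s, hs⟩ := Submodule.mem_span_singleton.mp hmem
    rw [smul_loc] at hs
    have h2 := congrArg (fun t => t * algR p (1 - thetaEl p) ^ k) hs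
    have h3 : algR p s * algR p (1 - thetaEl p) * algR p (1 - thetaEl p) ^ k =
        algR p (s * (1 - thetaEl p) ^ (k+1)) := by
      simp only [map_mul, map_pow]
      ring
    have h4 : algR p r * (piInv p ^ k * algR p (1 - thetaEl p)) * algR p (1 - thetaEl p) ^ k =
        algR p (r * (1 - thetaEl p)) := by
      have he : algR p r * (piInv p ^ k * algR p (1 - thetaEl p)) * algR p (1 - thetaEl p) ^ k =
          algR p r * (algR p (1 - thetaEl p) * piInv p) ^ k * algR p (1 - thetaEl p) := by
        rw [mul_pow]
        ring
      rw [he, piInv_spec, one_pow, mul_one, ← map_mul]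
    rw [h3, h4] at h2
    have h5 := algR_inj p h2
    have h6 : (1 - thetaEl p) * (s * (1 - thetaEl p) ^ k) = (1 - thetaEl p) * r := by
      linear_combination h5
    have h7 := mul_left_cancel₀ (pi_ne_zero p) h6
    exact ⟨s, by linear_combination -h7⟩
  · rintro ⟨s, rfl⟩
    apply Submodule.mem_span_singleton.mpr
    refine ⟨s, ?_⟩
    rw [smul_loc]
    have he : algR p ((1 - thetaEl p) ^ k * s) * (piInv p ^ k * algR p (1 - thetaEl p)) =
        algR p s * (algR p (1 - thetaEl p) * piInv p) ^ k * algR p (1 - thetaEl p) := by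
      simp only [map_mul, map_pow, mul_pow]
      ring
    rw [he, piInv_spec, one_pow, mul_one]

lemma qSeq_gen (z : Qmod p) : ∃ (k : ℕ) (r : Rtheta p), z = r • qSeq p k := by
  obtain ⟨v, hv⟩ := exists_v p
  obtain ⟨y, rfl⟩ := Submodule.Quotient.mk_surjective _ z
  obtain ⟨⟨r0, s0⟩, hy⟩ := IsLocalization.surj (M := Submonoid.powers ((p:ℕ) : Rtheta p)) y
  obtain ⟨n, hn⟩ := s0.2
  have hn' : ((p:ℕ) : Rtheta p) ^ n = ↑s0 := hn
  have hys : y * algR p (((p:ℕ) : Rtheta p) ^ n) = algR p r0 := by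
    rw [hn']
    exact hy
  have hpw : algR p (((p:ℕ) : Rtheta p) ^ n) * w0 p ^ n = 1 := by
    rw [map_pow, ← mul_pow, hw0, one_pow]
  have hyw : y = algR p r0 * w0 p ^ n := by
    have h0 := congrArg (fun t => t * w0 p ^ n) hys
    rw [mul_assoc, hpw, mul_one] at h0
    exact h0
  have hw0n : w0 p ^ n = algR p (v ^ n) * piInv p ^ (n * (p-1)) := by
    have h1 : w0 p ^ n * (algR p (1 - thetaEl p) * piInv p) ^ (n * (p-1)) = w0 p ^ n := by
      rw [piInv_spec, one_pow, mul_one]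
    have h2 : (algR p (1 - thetaEl p)) ^ (n * (p-1)) =
        algR p (((p:ℕ):Rtheta p) ^ n * v ^ n) := by
      rw [← map_pow]
      congr 1
      rw [mul_comm n (p-1), pow_mul, ← mul_pow, ← hv]
    rw [← h1, mul_pow, h2, map_mul]
    have h3 : algR p (((p:ℕ):Rtheta p) ^ n) * w0 p ^ n = 1 := hpw
    calc w0 p ^ n * (algR p (((p:ℕ):Rtheta p) ^ n) * algR p (v ^ n) * piInv p ^ (n * (p-1)))
        = (algR p (((p:ℕ):Rtheta p) ^ n) * w0 p ^ n) *
          (algR p (v ^ n) * piInv p ^ (n * (p-1))) := by ring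
    _ = algR p (v ^ n) * piInv p ^ (n * (p-1)) := by rw [h3, one_mul]
  refine ⟨n * (p-1) + 1, r0 * v ^ n, ?_⟩
  rw [qSeq, ← Submodule.Quotient.mk_smul]
  congr 1
  rw [smul_loc, hyw, hw0n]
  have h4 : piInv p ^ (n * (p-1) + 1) * algR p (1 - thetaEl p) =
      piInv p ^ (n * (p-1)) * (algR p (1 - thetaEl p) * piInv p) := by ring
  rw [h4, piInv_spec, mul_one, map_mul]
  ring

end S19I

/-- Let `p` be a prime and `M₂` a `ℤ[ϑ]`-module such that both the kernel and
the cokernel of multiplication by `1 − ϑ` on `M₂` are isomorphic to `ℤ/p`.  Then there is a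
`ℤ[ϑ]`-submodule `M₂′ ⊆ M₂` whose quotient `M₂/M₂′` is uniquely `p`-divisible, such that either
`M₂′ ≅ ℤ[ϑ]/(1 − ϑ)^ℓ` for some `ℓ ≥ 1`, or `M₂′ ≅ ℤ[ϑ] ⊕ Q` with
`Q = ℤ[ϑ, 1/p]/((1 − ϑ)ℤ[ϑ])`. -/
theorem stmt19 (p : ℕ) (hp : p.Prime) {M : Type} [AddCommGroup M] [Module (Rtheta p) M]
    (hker : Nonempty
      ((LinearMap.ker (LinearMap.lsmul (Rtheta p) M (1 - thetaEl p))) ≃+ ZMod p))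
    (hcoker : Nonempty
      ((M ⧸ LinearMap.range (LinearMap.lsmul (Rtheta p) M (1 - thetaEl p))) ≃+ ZMod p)) :
    ∃ M' : Submodule (Rtheta p) M,
      Function.Bijective (fun x : M ⧸ M' => p • x) ∧
      ((∃ ℓ : ℕ, 1 ≤ ℓ ∧ Nonempty
          (M' ≃ₗ[Rtheta p] (Rtheta p ⧸ Ideal.span ({(1 - thetaEl p) ^ ℓ} : Set (Rtheta p))))) ∨
        Nonempty (M' ≃ₗ[Rtheta p] (Rtheta p × Qmod p))) := by
  haveI : Fact p.Prime := ⟨hp⟩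
  haveI : NeZero p := ⟨hp.ne_zero⟩
  haveI : Fact (1 < p) := ⟨hp.one_lt⟩
  obtain ⟨eK⟩ := hker
  obtain ⟨eC⟩ := hcoker
  obtain ⟨v, hπv⟩ := S19.exists_v p
  have E4 : ∃ y : M, (1 - thetaEl p) • y = 0 ∧ y ≠ 0 := by
    refine ⟨(eK.symm 1).1, ?_, ?_⟩
    · have h := (eK.symm 1).2
      rw [LinearMap.mem_ker, LinearMap.lsmul_apply] at h
      exact h
    · intro h0
      have h1 : eK.symm 1 = 0 := Subtype.ext h0
      have h2 := congrArg eK h1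
      rw [AddEquiv.apply_symm_apply, map_zero] at h2
      exact one_ne_zero h2
  have E1 : ∀ y z : M, (1 - thetaEl p) • y = 0 → y ≠ 0 → (1 - thetaEl p) • z = 0 →
      ∃ a : ℤ, z = a • y := by
    intro y z hy hyne hz
    have hyk : y ∈ LinearMap.ker (LinearMap.lsmul (Rtheta p) M (1 - thetaEl p)) := by
      rw [LinearMap.mem_ker, LinearMap.lsmul_apply]
      exact hy
    have hzk : z ∈ LinearMap.ker (LinearMap.lsmul (Rtheta p) M (1 - thetaEl p)) := by
      rw [LinearMap.mem_ker, LinearMap.lsmul_apply]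
      exact hz
    have hek : eK ⟨y, hyk⟩ ≠ 0 := by
      intro h
      apply hyne
      have h1 : (⟨y, hyk⟩ : LinearMap.ker (LinearMap.lsmul (Rtheta p) M (1 - thetaEl p))) = 0 := by
        apply eK.injective
        rw [h, map_zero]
      exact congrArg Subtype.val h1
    refine ⟨((eK ⟨z, hzk⟩ * (eK ⟨y, hyk⟩)⁻¹).val : ℤ), ?_⟩
    have h1 : eK (((eK ⟨z, hzk⟩ * (eK ⟨y, hyk⟩)⁻¹).val : ℤ) • (⟨y, hyk⟩ :
        LinearMap.ker (LinearMap.lsmul (Rtheta p) M (1 - thetaEl p)))) = eK ⟨z, hzk⟩ := by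
      rw [map_zsmul, zsmul_eq_mul, Int.cast_natCast, ZMod.natCast_val, ZMod.cast_id,
        mul_assoc, inv_mul_cancel₀ hek, mul_one]
    have h2 := eK.injective h1
    have h3 := congrArg Subtype.val h2
    exact h3.symm
  have E2 : ∃ m : M, m ∉ LinearMap.range (LinearMap.lsmul (Rtheta p) M (1 - thetaEl p)) := by
    obtain ⟨c0, hc0⟩ : ∃ c : M ⧸ LinearMap.range (LinearMap.lsmul (Rtheta p) M (1 - thetaEl p)),
        c ≠ 0 := by
      refine ⟨eC.symm 1, ?_⟩
      intro h
      have h2 := congrArg eC h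
      rw [AddEquiv.apply_symm_apply, map_zero] at h2
      exact one_ne_zero h2
    obtain ⟨m, rfl⟩ := Submodule.Quotient.mk_surjective _ c0
    exact ⟨m, fun hm => hc0 ((Submodule.Quotient.mk_eq_zero _).mpr hm)⟩
  have mk_sub_eq : ∀ u w : M,
      (Submodule.Quotient.mk (u - w) :
        M ⧸ LinearMap.range (LinearMap.lsmul (Rtheta p) M (1 - thetaEl p))) =
      Submodule.Quotient.mk u - Submodule.Quotient.mk w := by
    intro u w
    exact Submodule.Quotient.mk_sub _
  have mk_zsmul_eq : ∀ (a : ℤ) (w : M),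
      (Submodule.Quotient.mk (a • w) :
        M ⧸ LinearMap.range (LinearMap.lsmul (Rtheta p) M (1 - thetaEl p))) =
      a • Submodule.Quotient.mk w := by
    intro a w
    rw [← Submodule.mkQ_apply]
    rw [map_zsmul]
    rw [Submodule.mkQ_apply]
  have E3 : ∀ m : M, m ∉ LinearMap.range (LinearMap.lsmul (Rtheta p) M (1 - thetaEl p)) →
      ∀ n : M, ∃ a : ℤ,
        n - a • m ∈ LinearMap.range (LinearMap.lsmul (Rtheta p) M (1 - thetaEl p)) := by
    intro m hm n
    have hmk : (Submodule.Quotient.mk m :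
        M ⧸ LinearMap.range (LinearMap.lsmul (Rtheta p) M (1 - thetaEl p))) ≠ 0 := by
      rw [Ne, Submodule.Quotient.mk_eq_zero]
      exact hm
    have hcm : eC (Submodule.Quotient.mk m) ≠ 0 := by
      intro h
      apply hmk
      apply eC.injective
      rw [h, map_zero]
    refine ⟨((eC (Submodule.Quotient.mk n) * (eC (Submodule.Quotient.mk m))⁻¹).val : ℤ), ?_⟩
    rw [← Submodule.Quotient.mk_eq_zero]
    apply eC.injective
    rw [map_zero, mk_sub_eq, mk_zsmul_eq, map_sub, map_zsmul, zsmul_eq_mul, Int.cast_natCast,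
      ZMod.natCast_val, ZMod.cast_id, mul_assoc, inv_mul_cancel₀ hcm, mul_one, sub_self]
  obtain ⟨M', hbij, hcase⟩ := S19A.abstract19 (1 - thetaEl p) (S19.hunit p) E1 p v hπv
    (S19.krull p) (S19I.qSeq p) (S19I.qSeq_rel p) (S19I.qSeq_ann p) (S19I.qSeq_gen p) E4 E2 E3
  exact ⟨M', hbij, hcase⟩
end
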